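/- arXiv:1908.07694 — 8 statements merged into one kernel-verified Lean document; each statement's English description precedes it below -/
import Mathlib

section
/- Hardy–Littlewood–Pólya theorem: For probability vectors x, y in ℝ^n, x is majorized by y if and only if there exists a doubly stochastic n×n matrix D such that x = D y. -/
/-!
Majorization is the statement that `x` lies in the convex hull of the permutations of `y`.
Each `pMax · k` is a maximum of linear forms, hence convex, and permutation invariant, so it can
only decrease on that hull. Conversely, if `x` were outside the hull, a separating linear form
`v ↦ ∑ aᵢ vᵢ` would satisfy `∑ aᵢ xᵢ > ∑ aᵢ y_{σ i}` for every `σ`; sorting `a`, `x` and `y`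
decreasingly, the rearrangement inequality and Abel summation against the prefix sums
`pMax x k ≤ pMax y k` contradict this. Birkhoff's theorem identifies the hull with the image of
the doubly stochastic matrices under `D ↦ D *ᵥ y`.
-/

open Finset Matrix

noncomputable def pMax {n : ℕ} (x : Fin n → ℝ) (k : ℕ) : ℝ :=
  sSup {s : ℝ | ∃ I : Finset (Fin n), I.card = k ∧ s = ∑ i ∈ I, x i}

def Maj {n : ℕ} (x y : Fin n → ℝ) : Prop :=
  (∀ k ≤ n, pMax x k ≤ pMax y k) ∧ (∑ i, x i = ∑ i, y i)

def ProbVec {n : ℕ} (p : Fin n → ℝ) : Prop :=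
  (∀ i, 0 ≤ p i) ∧ ∑ i, p i = 1

/-- A doubly stochastic matrix: nonnegative entries, all row and column sums equal 1. -/
def DoublyStochastic {n : ℕ} (D : Matrix (Fin n) (Fin n) ℝ) : Prop :=
  (∀ i j, 0 ≤ D i j) ∧ (∀ i, ∑ j, D i j = 1) ∧ (∀ j, ∑ i, D i j = 1)

open Equiv

theorem Finset.sum_le_sum_of_forall_le_of_card_eq {ι M : Type*} [DecidableEq ι] [AddCommGroup M]
    [LinearOrder M] [IsOrderedAddMonoid M] {y : ι → M}
    {I J : Finset ι} (hJ : ∀ i ∈ J, ∀ j ∉ J, y j ≤ y i) (hIJ : #I = #J) :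
    ∑ i ∈ I, y i ≤ ∑ i ∈ J, y i := by
  rcases J.eq_empty_or_nonempty with rfl | hne
  · simp_all
  -- `t = min_J y` separates `J` from its complement, and `#I = #J` lets us compare `y - t`.
  set t := J.inf' hne y
  have key : ∑ i ∈ I, (y i - t) ≤ ∑ i ∈ J, (y i - t) := calc
    ∑ i ∈ I, (y i - t) = ∑ i ∈ I ∩ J, (y i - t) + ∑ i ∈ I \ J, (y i - t) :=
      (sum_inter_add_sum_sdiff I J _).symm
    _ ≤ ∑ i ∈ I ∩ J, (y i - t) := by
      refine add_le_of_nonpos_right (sum_nonpos fun j hj => ?_)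
      rw [mem_sdiff] at hj
      exact sub_nonpos.2 (le_inf' hne y fun i hi => hJ i hi j hj.2)
    _ ≤ ∑ i ∈ J, (y i - t) :=
      sum_le_sum_of_subset_of_nonneg inter_subset_right fun i hi _ => sub_nonneg.2 (inf'_le y hi)
  simpa [sum_sub_distrib, hIJ] using key

section pMax

variable {n : ℕ}

theorem finite_pMax_set (x : Fin n → ℝ) (k : ℕ) :
    {s : ℝ | ∃ I : Finset (Fin n), I.card = k ∧ s = ∑ i ∈ I, x i}.Finite :=
  (Set.finite_range fun I : Finset (Fin n) => ∑ i ∈ I, x i).subset <| by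
    rintro _ ⟨I, -, rfl⟩
    exact ⟨I, rfl⟩

theorem sum_le_pMax (x : Fin n → ℝ) {I : Finset (Fin n)} {k : ℕ} (hI : #I = k) :
    ∑ i ∈ I, x i ≤ pMax x k :=
  le_csSup (finite_pMax_set x k).bddAbove ⟨I, hI, rfl⟩

theorem exists_pMax_eq_sum (x : Fin n → ℝ) {k : ℕ} (hk : k ≤ n) :
    ∃ I : Finset (Fin n), #I = k ∧ pMax x k = ∑ i ∈ I, x i := by
  obtain ⟨I, -, hI⟩ := exists_subset_card_eq (s := (univ : Finset (Fin n))) (by simpa using hk)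
  exact Set.Nonempty.csSup_mem (s := {s : ℝ | ∃ I : Finset (Fin n), I.card = k ∧ s = ∑ i ∈ I, x i})
    ⟨_, I, hI, rfl⟩ (finite_pMax_set x k)

theorem pMax_eq_sum_of_forall_le {x : Fin n → ℝ} {J : Finset (Fin n)}
    (hJ : ∀ i ∈ J, ∀ j ∉ J, x j ≤ x i) : pMax x #J = ∑ i ∈ J, x i := by
  obtain ⟨I, hI, hmax⟩ := exists_pMax_eq_sum x (by simpa using card_le_univ J)
  exact le_antisymm (hmax ▸ sum_le_sum_of_forall_le_of_card_eq hJ hI) (sum_le_pMax x rfl)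

theorem pMax_comp_perm (x : Fin n → ℝ) (σ : Perm (Fin n)) (k : ℕ) :
    pMax (x ∘ σ) k = pMax x k := by
  unfold pMax
  congr 1
  ext s
  constructor
  · rintro ⟨I, hI, rfl⟩
    exact ⟨I.map σ.toEmbedding, by simpa using hI, by simp⟩
  · rintro ⟨I, hI, rfl⟩
    exact ⟨I.map σ.symm.toEmbedding, by simpa using hI, by simp [sum_map]⟩

theorem pMax_eq_sum_val_lt_of_antitone {x : Fin n → ℝ} {τ : Perm (Fin n)}
    (hx : Antitone (x ∘ τ)) {k : ℕ} (hk : k ≤ n) :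
    pMax x k = ∑ i : Fin n with i.val < k, x (τ i) := by
  have hcard : #{i : Fin n | i.val < k} = k := by simp [Fin.card_filter_val_lt, hk]
  have htop := pMax_eq_sum_of_forall_le (x := x ∘ τ) (J := {i : Fin n | i.val < k})
    fun i hi j hj => hx <| Fin.le_def.2 <| by
      simp only [mem_filter, mem_univ, true_and, not_lt] at hi hj
      omega
  rwa [hcard, pMax_comp_perm] at htop

theorem convexOn_pMax {k : ℕ} (hk : k ≤ n) :
    ConvexOn ℝ Set.univ fun x : Fin n → ℝ => pMax x k := by
  refine ⟨convex_univ, fun u _ v _ a b ha hb _ => ?_⟩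
  obtain ⟨I, hI, hmax⟩ := exists_pMax_eq_sum (a • u + b • v) hk
  calc pMax (a • u + b • v) k = a * ∑ i ∈ I, u i + b * ∑ i ∈ I, v i := by
        simp [hmax, sum_add_distrib, mul_sum]
    _ ≤ a • pMax u k + b • pMax v k := by
        simp only [smul_eq_mul]
        gcongr <;> exact sum_le_pMax _ hI

end pMax

section Rearrangement

variable {n : ℕ}

theorem exists_perm_antitone_comp {α : Type*} [LinearOrder α] (x : Fin n → α) :
    ∃ τ : Perm (Fin n), Antitone (x ∘ τ) :=
  ⟨Tuple.sort (OrderDual.toDual ∘ x), monotone_toDual_comp_iff.1 (Tuple.monotone_sort _)⟩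

section Abel

variable {R : Type*} [CommRing R] [LinearOrder R] [IsStrictOrderedRing R]

theorem Fin.sum_filter_val_lt_castSucc {M : Type*} [AddCommMonoid M] (f : Fin (n + 1) → M)
    {k : ℕ} (hk : k ≤ n) :
    ∑ i : Fin (n + 1) with i.val < k, f i = ∑ i : Fin n with i.val < k, f i.castSucc := by
  simp [sum_filter, Fin.sum_univ_castSucc, hk.not_gt]

theorem Antitone.mul_sum_le_sum_mul {b d : Fin n → R} {c : R} (hb : Antitone b)
    (hc : ∀ i, c ≤ b i) (hd : ∀ k ≤ n, 0 ≤ ∑ i : Fin n with i.val < k, d i) :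
    c * ∑ i, d i ≤ ∑ i, b i * d i := by
  induction n generalizing c with
  | zero => simp
  | succ n ih =>
    -- Abel summation one index at a time: `b (last n)` bounds `b` below on the shorter range.
    have hprefix := ih (hb.comp_monotone Fin.strictMono_castSucc.monotone)
      (fun i => hb (Fin.le_last _))
      fun k hk => Fin.sum_filter_val_lt_castSucc d hk ▸ hd k (by omega)
    have htotal : 0 ≤ ∑ i, d i := by
      simpa only [filter_true_of_mem fun (i : Fin (n + 1)) _ => i.is_lt] using hd (n + 1) le_rfl
    rw [Fin.sum_univ_castSucc (fun i => b i * d i)]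
    calc c * ∑ i, d i ≤ b (Fin.last n) * ∑ i, d i := mul_le_mul_of_nonneg_right (hc _) htotal
      _ = b (Fin.last n) * ∑ i : Fin n, d i.castSucc + b (Fin.last n) * d (Fin.last n) := by
        rw [Fin.sum_univ_castSucc, mul_add]
      _ ≤ _ := add_le_add_left hprefix _

theorem Antitone.sum_mul_le_sum_mul_of_sum_val_lt_le {b u v : Fin n → R} (hb : Antitone b)
    (hle : ∀ k ≤ n, ∑ i : Fin n with i.val < k, u i ≤ ∑ i : Fin n with i.val < k, v i)
    (heq : ∑ i, u i = ∑ i, v i) : ∑ i, b i * u i ≤ ∑ i, b i * v i := by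
  obtain ⟨c, hc⟩ := (Set.finite_range b).bddBelow
  have := hb.mul_sum_le_sum_mul (d := v - u) (fun i => hc ⟨i, rfl⟩)
    fun k hk => by simpa [sum_sub_distrib] using hle k hk
  simpa [mul_sub, sum_sub_distrib, heq] using this

end Abel

theorem Maj.exists_perm_sum_mul_le {x y : Fin n → ℝ} (h : Maj x y) (a : Fin n → ℝ) :
    ∃ σ : Perm (Fin n), ∑ i, a i * x i ≤ ∑ i, a i * y (σ i) := by
  obtain ⟨τa, ha⟩ := exists_perm_antitone_comp a
  obtain ⟨τx, hx⟩ := exists_perm_antitone_comp x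
  obtain ⟨τy, hy⟩ := exists_perm_antitone_comp y
  refine ⟨τy * τa⁻¹, ?_⟩
  calc ∑ i, a i * x i = ∑ i, a (τa i) * x (τx ((τx⁻¹ * τa) i)) := by
        simpa using (Equiv.sum_comp τa fun i => a i * x i).symm
    _ ≤ ∑ i, a (τa i) * x (τx i) := (ha.monovary hx).sum_mul_comp_perm_le_sum_mul
    _ ≤ ∑ i, a (τa i) * y (τy i) := by
        refine ha.sum_mul_le_sum_mul_of_sum_val_lt_le (fun k hk => ?_) ?_
        · rw [← pMax_eq_sum_val_lt_of_antitone hx hk, ← pMax_eq_sum_val_lt_of_antitone hy hk]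
          exact h.1 k hk
        · rw [Equiv.sum_comp τx x, Equiv.sum_comp τy y]
          exact h.2
    _ = ∑ i, a i * y ((τy * τa⁻¹) i) := by
        simpa using Equiv.sum_comp τa fun i => a i * y ((τy * τa⁻¹) i)

end Rearrangement

section ConvexHull

theorem ConvexOn.le_of_mem_convexHull_range_comp_perm {ι : Type*} {f : (ι → ℝ) → ℝ}
    {x y : ι → ℝ} (hf : ConvexOn ℝ Set.univ f) (hfy : ∀ σ : Perm ι, f (y ∘ σ) = f y)
    (hx : x ∈ convexHull ℝ (Set.range fun σ : Perm ι => y ∘ σ)) : f x ≤ f y := by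
  obtain ⟨_, ⟨σ, rfl⟩, hσ⟩ := hf.exists_ge_of_mem_convexHull (Set.subset_univ _) hx
  exact hσ.trans (hfy σ).le

theorem sum_eq_of_mem_convexHull_range_comp_perm {ι : Type*} [Fintype ι] {x y : ι → ℝ}
    (hx : x ∈ convexHull ℝ (Set.range fun σ : Perm ι => y ∘ σ)) : ∑ i, x i = ∑ i, y i :=
  convexHull_min (Set.range_subset_iff.2 fun σ => Equiv.sum_comp σ y)
    (convex_hyperplane ⟨fun _ _ => sum_add_distrib, fun _ _ => (mul_sum _ _ _).symm⟩ _) hx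

theorem maj_of_mem_convexHull {n : ℕ} {x y : Fin n → ℝ}
    (hx : x ∈ convexHull ℝ (Set.range fun σ : Perm (Fin n) => y ∘ σ)) : Maj x y :=
  ⟨fun k hk => (convexOn_pMax hk).le_of_mem_convexHull_range_comp_perm (pMax_comp_perm y · k) hx,
    sum_eq_of_mem_convexHull_range_comp_perm hx⟩

theorem Maj.mem_convexHull {n : ℕ} {x y : Fin n → ℝ} (h : Maj x y) :
    x ∈ convexHull ℝ (Set.range fun σ : Perm (Fin n) => y ∘ σ) := by
  by_contra hx
  obtain ⟨f, u, hfy, hfx⟩ := geometric_hahn_banach_closed_point (convex_convexHull ℝ _)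
    ((Set.finite_range _).isClosed_convexHull (𝕜 := ℝ)) hx
  have hf : ∀ v, f v = ∑ i, (f fun j => if i = j then 1 else 0) * v i := fun v => by
    simpa [mul_comm] using f.toLinearMap.pi_apply_eq_sum_univ v
  obtain ⟨σ, hσ⟩ := h.exists_perm_sum_mul_le fun i => f fun j => if i = j then 1 else 0
  have hfσ := hfy _ (subset_convexHull ℝ _ ⟨σ, rfl⟩)
  rw [hf] at hfx hfσ
  exact (hfσ.trans hfx).not_ge hσ

theorem exists_mem_doublyStochastic_eq_mulVec_iff {ι : Type*} [Fintype ι] [DecidableEq ι]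
    {x y : ι → ℝ} : (∃ D ∈ doublyStochastic ℝ ι, x = D *ᵥ y) ↔
      x ∈ convexHull ℝ (Set.range fun σ : Perm ι => y ∘ σ) := by
  have hrange : (Set.range fun σ : Perm ι => y ∘ σ) =
      (mulVecBilin ℝ ℝ).flip y '' {σ.permMatrix ℝ | σ : Perm ι} := by
    ext v
    simp [permMatrix_mulVec]
  rw [hrange, ← LinearMap.image_convexHull, ← doublyStochastic_eq_convexHull_permMatrix]
  simp [eq_comm]

end ConvexHull

theorem hardy_littlewood_polya_general {n : ℕ} (x y : Fin n → ℝ) :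
    Maj x y ↔ ∃ D : Matrix (Fin n) (Fin n) ℝ, DoublyStochastic D ∧ x = D.mulVec y := by
  simp only [DoublyStochastic, ← mem_doublyStochastic_iff_sum]
  rw [exists_mem_doublyStochastic_eq_mulVec_iff]
  exact ⟨Maj.mem_convexHull, maj_of_mem_convexHull⟩

/-- Hardy–Littlewood–Pólya: for probability vectors `x`, `y`,
`x ≺ y` iff `x = D y` for some doubly stochastic matrix `D`. -/
theorem hardy_littlewood_polya {n : ℕ} (x y : Fin n → ℝ)
    (hx : ProbVec x) (hy : ProbVec y) :
    Maj x y ↔ ∃ D : Matrix (Fin n) (Fin n) ℝ, DoublyStochastic D ∧ x = D.mulVec y :=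
  hardy_littlewood_polya_general x y
end

section
/- Let S be a nonempty convex set of density matrices on ℂ^n and let N = {|v_ℓ⟩}_{ℓ=1}^n be an orthonormal basis. For 1 ≤ k ≤ n, define r_k = min_{ρ∈S} max_{|I|=k} Tr(N_I ρ), where N_I = Σ_{ℓ∈I}|v_ℓ⟩⟨v_ℓ|. Then the sequence (r_k) is concave in k, i.e., 2 r_k ≥ r_{k-1} + r_{k+1} for all 2 ≤ k ≤ n-1; equivalently, the vector r = (r_1, r_2 − r_1, ..., r_n − r_{n−1}) has entries in non-increasing order. -/
open Finset Matrix ComplexOrder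

/-- `N_I = ∑_{ℓ ∈ I} |v_ℓ⟩⟨v_ℓ|`. -/
noncomputable def projSum {n : ℕ} (v : Fin n → Fin n → ℂ) (I : Finset (Fin n)) :
    Matrix (Fin n) (Fin n) ℂ :=
  ∑ ℓ ∈ I, Matrix.vecMulVec (v ℓ) (star (v ℓ))

/-- `max_{|I| = k} Tr(N_I ρ)`. -/
noncomputable def innerMax {n : ℕ} (v : Fin n → Fin n → ℂ)
    (ρ : Matrix (Fin n) (Fin n) ℂ) (k : ℕ) : ℝ :=
  sSup {s : ℝ | ∃ I : Finset (Fin n), I.card = k ∧ s = (Matrix.trace (projSum v I * ρ)).re}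

/-!
For a fixed state `ρ`, `max_{|I| = k} Tr(N_I ρ)` is the sum of the `k` largest of the numbers
`p ℓ = Re Tr(|v_ℓ⟩⟨v_ℓ| ρ)`, and such top-`k` sums are concave in `k`: from optimal sets
`I` of size `k - 1` and `J` of size `k + 1`, moving one index of `J \ I` into `I` gives two sets
of size `k` with the same total. Taking `ρ` optimal for `r k` then gives
`r (k - 1) + r (k + 1) ≤ f_ρ (k - 1) + f_ρ (k + 1) ≤ 2 f_ρ k = 2 r k`.
-/

noncomputable def topSum {ι : Type*} (p : ι → ℝ) (k : ℕ) : ℝ :=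
  sSup {s : ℝ | ∃ I : Finset ι, I.card = k ∧ s = ∑ ℓ ∈ I, p ℓ}

section topSum

variable {ι : Type*} [Fintype ι] (p : ι → ℝ)

lemma finite_sums_card_eq (k : ℕ) :
    {s : ℝ | ∃ I : Finset ι, I.card = k ∧ s = ∑ ℓ ∈ I, p ℓ}.Finite :=
  (Set.finite_range fun I : Finset ι => ∑ ℓ ∈ I, p ℓ).subset fun _ ⟨I, _, hs⟩ => ⟨I, hs.symm⟩

lemma sum_le_topSum {I : Finset ι} {k : ℕ} (hI : I.card = k) : ∑ ℓ ∈ I, p ℓ ≤ topSum p k :=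
  le_csSup (finite_sums_card_eq p k).bddAbove ⟨I, hI, rfl⟩

lemma exists_card_eq_topSum_eq_sum {k : ℕ} (hk : k ≤ Fintype.card ι) :
    ∃ I : Finset ι, I.card = k ∧ topSum p k = ∑ ℓ ∈ I, p ℓ := by
  obtain ⟨I, -, hI⟩ := Finset.exists_subset_card_eq (s := (univ : Finset ι)) (by simpa using hk)
  refine Set.Nonempty.csSup_mem ?_ (finite_sums_card_eq p k)
  exact ⟨_, I, hI, rfl⟩

lemma topSum_sub_one_add_topSum_add_one_le {k : ℕ} (hk : 1 ≤ k)
    (hkn : k + 1 ≤ Fintype.card ι) :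
    topSum p (k - 1) + topSum p (k + 1) ≤ 2 * topSum p k := by
  classical
  obtain ⟨I, hIcard, hI⟩ := exists_card_eq_topSum_eq_sum p (k := k - 1) (by omega)
  obtain ⟨J, hJcard, hJ⟩ := exists_card_eq_topSum_eq_sum p hkn
  obtain ⟨x, hxJ, hxI⟩ : ∃ x ∈ J, x ∉ I := Finset.not_subset.mp fun hJI => by
    have := Finset.card_le_card hJI
    omega
  have hinsert : ∑ ℓ ∈ insert x I, p ℓ ≤ topSum p k :=
    sum_le_topSum p (by rw [Finset.card_insert_of_notMem hxI, hIcard]; omega)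
  have herase : ∑ ℓ ∈ J.erase x, p ℓ ≤ topSum p k :=
    sum_le_topSum p (by rw [Finset.card_erase_of_mem hxJ, hJcard]; omega)
  rw [Finset.sum_insert hxI] at hinsert
  rw [hI, hJ, ← Finset.add_sum_erase J p hxJ]
  linarith

end topSum

lemma innerMax_eq_topSum {n : ℕ} (v : Fin n → Fin n → ℂ) (ρ : Matrix (Fin n) (Fin n) ℂ)
    (k : ℕ) :
    innerMax v ρ k = topSum (fun ℓ => (trace (vecMulVec (v ℓ) (star (v ℓ)) * ρ)).re) k := by
  simp only [innerMax, topSum, projSum, Finset.sum_mul, trace_sum, Complex.re_sum]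

theorem lower_bound_sequence_concave_general {n : ℕ} (S : Set (Matrix (Fin n) (Fin n) ℂ))
    (v : Fin n → Fin n → ℂ)
    (r : ℕ → ℝ)
    (hr : ∀ k, 1 ≤ k → k ≤ n → IsLeast {t : ℝ | ∃ ρ ∈ S, t = innerMax v ρ k} (r k)) :
    ∀ k, 2 ≤ k → k + 1 ≤ n → r (k - 1) + r (k + 1) ≤ 2 * r k := by
  intro k hk hkn
  obtain ⟨⟨ρ, hρS, hρ⟩, -⟩ := hr k (by omega) (by omega)
  have hprev : r (k - 1) ≤ innerMax v ρ (k - 1) :=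
    (hr (k - 1) (by omega) (by omega)).2 ⟨ρ, hρS, rfl⟩
  have hnext : r (k + 1) ≤ innerMax v ρ (k + 1) :=
    (hr (k + 1) (by omega) (by omega)).2 ⟨ρ, hρS, rfl⟩
  have hconcave := topSum_sub_one_add_topSum_add_one_le
    (fun ℓ => (trace (vecMulVec (v ℓ) (star (v ℓ)) * ρ)).re) (k := k) (by omega)
    (by rwa [Fintype.card_fin])
  simp only [← innerMax_eq_topSum] at hconcave
  linarith

/-- for a nonempty convex set `S` of density matrices and an orthonormal
basis `v`, the attained minima `r k = min_{ρ ∈ S} max_{|I| = k} Tr(N_I ρ)` form a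
concave sequence: `2 r k ≥ r (k-1) + r (k+1)` for `2 ≤ k ≤ n - 1`. -/
theorem lower_bound_sequence_concave {n : ℕ} (S : Set (Matrix (Fin n) (Fin n) ℂ))
    (hne : S.Nonempty) (hconv : Convex ℝ S)
    (hdens : ∀ ρ ∈ S, ρ.PosSemidef ∧ Matrix.trace ρ = 1)
    (v : Fin n → Fin n → ℂ)
    (hv : ∀ i j, star (v i) ⬝ᵥ v j = if i = j then (1 : ℂ) else 0)
    (r : ℕ → ℝ)
    (hr : ∀ k, 1 ≤ k → k ≤ n → IsLeast {t : ℝ | ∃ ρ ∈ S, t = innerMax v ρ k} (r k)) :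
    ∀ k, 2 ≤ k → k + 1 ≤ n → r (k - 1) + r (k + 1) ≤ 2 * r k :=
  lower_bound_sequence_concave_general S v r hr
end

section
/- Let S be a nonempty set of density matrices on ℂ^n and N = {|v_ℓ⟩}_{ℓ=1}^n an orthonormal basis. Define r_k = min_{ρ∈S} max_{|I|=k} Tr(N_I ρ) and r = (r_1, r_2 − r_1, ..., r_n − r_{n−1}). Then for every ρ ∈ S, the outcome probability vector q(ρ) = (⟨v_ℓ|ρ|v_ℓ⟩)_ℓ majorizes r, i.e., r ≺ q(ρ). -/
open Finset Matrix ComplexOrder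

lemma pMax_set_eq {n : ℕ} (x : Fin n → ℝ) (k : ℕ) :
    {s : ℝ | ∃ I : Finset (Fin n), I.card = k ∧ s = ∑ i ∈ I, x i}
      = ↑((Finset.univ.powersetCard k).image fun I => ∑ i ∈ I, x i) := by
  ext s
  simp only [Set.mem_setOf_eq, Finset.coe_image, Set.mem_image, Finset.mem_coe,
    Finset.mem_powersetCard]
  constructor
  · rintro ⟨I, hI, rfl⟩; exact ⟨I, ⟨Finset.subset_univ I, hI⟩, rfl⟩
  · rintro ⟨I, ⟨-, hI⟩, rfl⟩; exact ⟨I, hI, rfl⟩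

lemma le_pMax {n : ℕ} (x : Fin n → ℝ) {k : ℕ} {I : Finset (Fin n)} (hI : I.card = k) :
    ∑ i ∈ I, x i ≤ pMax x k := by
  apply le_csSup
  · rw [pMax_set_eq]
    exact (Finset.finite_toSet _).bddAbove
  · exact ⟨I, hI, rfl⟩

lemma pMax_attained {n : ℕ} (x : Fin n → ℝ) {k : ℕ} (hk : k ≤ n) :
    ∃ I : Finset (Fin n), I.card = k ∧ pMax x k = ∑ i ∈ I, x i := by
  have hne : {s : ℝ | ∃ I : Finset (Fin n), I.card = k ∧ s = ∑ i ∈ I, x i}.Nonempty := by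
    obtain ⟨I, -, hI⟩ := Finset.exists_subset_card_eq (by simpa using hk :
      k ≤ (Finset.univ : Finset (Fin n)).card)
    exact ⟨∑ i ∈ I, x i, I, hI, rfl⟩
  have hfin : {s : ℝ | ∃ I : Finset (Fin n), I.card = k ∧ s = ∑ i ∈ I, x i}.Finite := by
    rw [pMax_set_eq]; exact Finset.finite_toSet _
  obtain ⟨I, hI, h⟩ := hne.csSup_mem hfin
  exact ⟨I, hI, h⟩

lemma pMax_zero {n : ℕ} (x : Fin n → ℝ) : pMax x 0 = 0 := by
  have : {s : ℝ | ∃ I : Finset (Fin n), I.card = 0 ∧ s = ∑ i ∈ I, x i} = {0} := by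
    ext s
    simp [Finset.card_eq_zero]
  rw [pMax, this, csSup_singleton]

lemma pMax_concave {n : ℕ} (x : Fin n → ℝ) {k : ℕ} (hk : 1 ≤ k) (hk2 : k + 1 ≤ n) :
    pMax x (k + 1) + pMax x (k - 1) ≤ pMax x k + pMax x k := by
  obtain ⟨I, hI, hIe⟩ := pMax_attained x hk2
  obtain ⟨J, hJ, hJe⟩ := pMax_attained x (le_trans (Nat.sub_le k 1) (le_trans (Nat.le_succ k) hk2))
  have hns : ¬ I ⊆ J := fun h => absurd (Finset.card_le_card h) (by omega)
  obtain ⟨i, hiI, hiJ⟩ := Finset.not_subset.mp hns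
  have hAcard : (insert i J).card = k := by
    rw [Finset.card_insert_of_notMem hiJ, hJ]; omega
  have hBcard : (I.erase i).card = k := by
    rw [Finset.card_erase_of_mem hiI, hI]
    omega
  have hsum : ∑ j ∈ I, x j + ∑ j ∈ J, x j
      = ∑ j ∈ insert i J, x j + ∑ j ∈ I.erase i, x j := by
    rw [Finset.sum_insert hiJ, ← Finset.add_sum_erase _ _ hiI]; ring
  rw [hIe, hJe, hsum]
  exact add_le_add (le_pMax x hAcard) (le_pMax x hBcard)

lemma trace_vecMulVec {n : ℕ} (w : Fin n → ℂ) (ρ : Matrix (Fin n) (Fin n) ℂ) :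
    Matrix.trace (Matrix.vecMulVec w (star w) * ρ) = star w ⬝ᵥ ρ.mulVec w := by
  simp only [Matrix.trace, Matrix.diag, Matrix.mul_apply, Matrix.vecMulVec_apply,
    dotProduct, Matrix.mulVec, Pi.star_apply, Finset.mul_sum]
  rw [Finset.sum_comm]
  apply Finset.sum_congr rfl
  intro j _
  apply Finset.sum_congr rfl
  intro i _
  ring

lemma trace_projSum {n : ℕ} (v : Fin n → Fin n → ℂ) (I : Finset (Fin n))
    (ρ : Matrix (Fin n) (Fin n) ℂ) :
    Matrix.trace (projSum v I * ρ) = ∑ ℓ ∈ I, star (v ℓ) ⬝ᵥ ρ.mulVec (v ℓ) := by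
  rw [projSum, Finset.sum_mul, Matrix.trace_sum]
  exact Finset.sum_congr rfl fun ℓ _ => trace_vecMulVec (v ℓ) ρ

lemma projSum_univ {n : ℕ} (v : Fin n → Fin n → ℂ)
    (hv : ∀ i j, star (v i) ⬝ᵥ v j = if i = j then (1 : ℂ) else 0) :
    projSum v Finset.univ = 1 := by
  set A : Matrix (Fin n) (Fin n) ℂ := Matrix.of fun i ℓ => v ℓ i with hA
  have h1 : Aᴴ * A = 1 := by
    ext ℓ m
    simpa [Matrix.mul_apply, Matrix.conjTranspose_apply, Matrix.one_apply, hA,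
      dotProduct] using hv ℓ m
  have h2 : A * Aᴴ = 1 := mul_eq_one_comm.mp h1
  have h3 : projSum v Finset.univ = A * Aᴴ := by
    ext i j
    simp [projSum, Matrix.sum_apply, Matrix.vecMulVec_apply, Matrix.mul_apply,
      Matrix.conjTranspose_apply, hA]
  rw [h3, h2]

lemma innerMax_eq_pMax {n : ℕ} (v : Fin n → Fin n → ℂ) (ρ : Matrix (Fin n) (Fin n) ℂ)
    (k : ℕ) :
    innerMax v ρ k = pMax (fun ℓ => (star (v ℓ) ⬝ᵥ ρ.mulVec (v ℓ)).re) k := by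
  unfold innerMax pMax
  congr 1
  ext s
  simp [trace_projSum, Complex.re_sum]

lemma sum_q_eq_one {n : ℕ} (v : Fin n → Fin n → ℂ)
    (hv : ∀ i j, star (v i) ⬝ᵥ v j = if i = j then (1 : ℂ) else 0)
    (ρ : Matrix (Fin n) (Fin n) ℂ) (hρ : Matrix.trace ρ = 1) :
    ∑ ℓ, (star (v ℓ) ⬝ᵥ ρ.mulVec (v ℓ)).re = 1 := by
  have h := trace_projSum v Finset.univ ρ
  rw [projSum_univ v hv, one_mul, hρ] at h
  rw [← Complex.re_sum, ← h]
  simp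

/-- with `r k = min_{ρ ∈ S} max_{|I| = k} Tr(N_I ρ)` (attained) and
`r 0 = 0`, the increment vector `(r 1, r 2 − r 1, …, r n − r (n-1))` is majorized by
the outcome probability vector `q(ρ) = (⟨v_ℓ|ρ|v_ℓ⟩)_ℓ` of every `ρ ∈ S`. -/
theorem majorization_lower_bound {n : ℕ} (S : Set (Matrix (Fin n) (Fin n) ℂ))
    (hne : S.Nonempty)
    (hdens : ∀ ρ ∈ S, ρ.PosSemidef ∧ Matrix.trace ρ = 1)
    (v : Fin n → Fin n → ℂ)
    (hv : ∀ i j, star (v i) ⬝ᵥ v j = if i = j then (1 : ℂ) else 0)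
    (r : ℕ → ℝ) (hr0 : r 0 = 0)
    (hr : ∀ k, 1 ≤ k → k ≤ n → IsLeast {t : ℝ | ∃ ρ ∈ S, t = innerMax v ρ k} (r k)) :
    ∀ ρ ∈ S, Maj (fun j : Fin n => r ((j : ℕ) + 1) - r (j : ℕ))
      (fun ℓ : Fin n => (star (v ℓ) ⬝ᵥ ρ.mulVec (v ℓ)).re) := by
  intro ρ hρ
  set d : ℕ → ℝ := fun j => r (j + 1) - r j with hd
  -- single-step concavity of r
  have hstep : ∀ k, 1 ≤ k → k + 1 ≤ n → d k ≤ d (k - 1) := by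
    intro k hk hkn
    obtain ⟨σ, hσ, hσe⟩ := (hr k hk (by omega)).1
    set q : Fin n → ℝ := fun ℓ => (star (v ℓ) ⬝ᵥ σ.mulVec (v ℓ)).re with hq
    have hrk : r k = pMax q k := hσe.trans (innerMax_eq_pMax v σ k)
    have h1 : r (k + 1) ≤ pMax q (k + 1) := by
      have := (hr (k + 1) (by omega) hkn).2 ⟨σ, hσ, rfl⟩
      rwa [innerMax_eq_pMax v σ (k + 1)] at this
    have h2 : r (k - 1) ≤ pMax q (k - 1) := by
      rcases Nat.eq_or_lt_of_le hk with h | h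
      · rw [← h]
        simp [hr0, pMax_zero]
      · have := (hr (k - 1) (by omega) (by omega)).2 ⟨σ, hσ, rfl⟩
        rwa [innerMax_eq_pMax v σ (k - 1)] at this
    have h3 := pMax_concave q hk hkn
    have hk1 : k - 1 + 1 = k := by omega
    simp only [hd, hk1]
    linarith
  -- antitonicity of d on {0, ..., n-1}
  have hmono : ∀ j, j + 1 ≤ n → ∀ i ≤ j, d j ≤ d i := by
    intro j
    induction j with
    | zero => intro _ i hi; interval_cases i; exact le_rfl
    | succ m ih =>
      intro hjn i hi
      rcases Nat.eq_or_lt_of_le hi with h | h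
      · rw [h]
      · have h1 : d (m + 1) ≤ d m := by
          have := hstep (m + 1) (by omega) (by omega)
          simpa using this
        exact h1.trans (ih (by omega) i (by omega))
  -- key: sum of d over any k-subset is ≤ r k
  have hkey : ∀ k (I : Finset (Fin n)), I.card = k → ∑ j ∈ I, d (j : ℕ) ≤ r k := by
    intro k
    induction k with
    | zero =>
      intro I hI
      rw [Finset.card_eq_zero.mp hI, Finset.sum_empty, hr0]
    | succ m ih =>
      intro I hI
      have hIne : I.Nonempty := Finset.card_pos.mp (by omega)
      set M := I.max' hIne with hM
      have hMmem : M ∈ I := I.max'_mem hIne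
      have hsub : I ⊆ Finset.Iic M := fun a ha => Finset.mem_Iic.mpr (I.le_max' a ha)
      have hcard : m + 1 ≤ (M : ℕ) + 1 := by
        have := Finset.card_le_card hsub
        rwa [hI, Fin.card_Iic] at this
      have h1 : d (M : ℕ) ≤ d m := hmono (M : ℕ) (by omega) m (by omega)
      have h2 : ∑ j ∈ I.erase M, d (j : ℕ) ≤ r m := by
        apply ih
        rw [Finset.card_erase_of_mem hMmem, hI]
        omega
      have h3 : ∑ j ∈ I, d (j : ℕ) = d (M : ℕ) + ∑ j ∈ I.erase M, d (j : ℕ) :=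
        (Finset.add_sum_erase _ _ hMmem).symm
      have h4 : d m = r (m + 1) - r m := rfl
      rw [h3]
      linarith
  constructor
  · intro k hk
    rcases Nat.eq_zero_or_pos k with rfl | hk1
    · rw [pMax_zero, pMax_zero]
    · obtain ⟨I, hI, hIe⟩ := pMax_attained (fun j : Fin n => r ((j : ℕ) + 1) - r (j : ℕ)) hk
      have hle1 : pMax (fun j : Fin n => r ((j : ℕ) + 1) - r (j : ℕ)) k ≤ r k := by
        rw [hIe]; exact hkey k I hI
      have hle2 : r k ≤ pMax (fun ℓ : Fin n => (star (v ℓ) ⬝ᵥ ρ.mulVec (v ℓ)).re) k := by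
        have := (hr k hk1 hk).2 ⟨ρ, hρ, rfl⟩
        rwa [innerMax_eq_pMax v ρ k] at this
      exact hle1.trans hle2
  · have hsum1 : ∑ j : Fin n, (r ((j : ℕ) + 1) - r (j : ℕ)) = r n := by
      rw [Fin.sum_univ_eq_sum_range (fun j => r (j + 1) - r j), Finset.sum_range_sub, hr0,
        sub_zero]
    have hsum2 : ∑ ℓ : Fin n, (star (v ℓ) ⬝ᵥ ρ.mulVec (v ℓ)).re = 1 :=
      sum_q_eq_one v hv ρ (hdens ρ hρ).2
    rcases Nat.eq_zero_or_pos n with rfl | hn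
    · simp
    · have hrn : r n = 1 := by
        obtain ⟨σ, hσ, hσe⟩ := (hr n hn le_rfl).1
        have h1 : innerMax v σ n = ∑ ℓ, (star (v ℓ) ⬝ᵥ σ.mulVec (v ℓ)).re := by
          rw [innerMax_eq_pMax v σ n]
          obtain ⟨I, hI, hIe⟩ := pMax_attained (fun ℓ : Fin n =>
            (star (v ℓ) ⬝ᵥ σ.mulVec (v ℓ)).re) (le_refl n)
          have : I = Finset.univ := I.eq_univ_of_card (by simpa using hI)
          rw [hIe, this]
        rw [hσe, h1, sum_q_eq_one v hv σ (hdens σ hσ).2]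
      simp only [hsum1, hsum2, hrn]
end

section
/- For n = 2 or n = 3: let S be a nonempty set of density matrices on ℂ^n, N = {|v_ℓ⟩} an orthonormal basis, and s_k = max_{ρ∈S} max_{|I|=k} Tr(N_I ρ). Then 2 s_1 ≥ s_2, and when n = 3 also 2 s_2 ≥ s_1 + s_3. Hence the vector s = (s_1, s_2 − s_1, ..., s_n − s_{n−1}) is in non-increasing order. -/
open Finset Matrix ComplexOrder

/-! `Tr(N_I ρ)` is additive in `I`, so splitting a maximising `I` of size `a + b` gives
`s (a + b) ≤ s a + s b`, in particular `s 2 ≤ 2 s 1`. For `n = 3` we have `s 3 = 1` because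
`N_univ = 1`; if `ρ` attains `s 1` at `ℓ`, the weights of the two pairs containing `ℓ` add up
to `Tr(N_ℓ ρ) + 1 = s 1 + s 3`, and each is at most `s 2`. The increments of `s` are then
non-increasing by midpoint concavity of `s` on `{0, …, n}`. -/

noncomputable def projWeight {n : ℕ} (v : Fin n → Fin n → ℂ) (ρ : Matrix (Fin n) (Fin n) ℂ)
    (I : Finset (Fin n)) : ℝ :=
  (trace (projSum v I * ρ)).re

def IsMaxWeight {n : ℕ} (v : Fin n → Fin n → ℂ) (S : Set (Matrix (Fin n) (Fin n) ℂ))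
    (s : ℕ → ℝ) : Prop :=
  ∀ k, 1 ≤ k → k ≤ n → IsGreatest {t : ℝ | ∃ ρ ∈ S, t = innerMax v ρ k} (s k)

section projWeight

variable {n : ℕ} (v : Fin n → Fin n → ℂ) (ρ : Matrix (Fin n) (Fin n) ℂ)

lemma projWeight_eq_sum (I : Finset (Fin n)) :
    projWeight v ρ I = ∑ ℓ ∈ I, projWeight v ρ {ℓ} := by
  simp only [projWeight, projSum, sum_singleton, sum_mul, trace_sum, Complex.re_sum]

lemma finite_projWeight_card_eq (k : ℕ) :
    {t : ℝ | ∃ I : Finset (Fin n), #I = k ∧ t = (trace (projSum v I * ρ)).re}.Finite :=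
  (Set.finite_range (projWeight v ρ)).subset fun _ ⟨I, _, hI⟩ ↦ ⟨I, hI.symm⟩

lemma projWeight_le_innerMax {I : Finset (Fin n)} {k : ℕ} (hI : #I = k) :
    projWeight v ρ I ≤ innerMax v ρ k :=
  le_csSup (finite_projWeight_card_eq v ρ k).bddAbove ⟨I, hI, rfl⟩

lemma exists_innerMax_eq_projWeight {k : ℕ} (hk : k ≤ n) :
    ∃ I : Finset (Fin n), #I = k ∧ innerMax v ρ k = projWeight v ρ I := by
  obtain ⟨I, -, hI⟩ := exists_subset_card_eq (s := (univ : Finset (Fin n))) (by simpa using hk)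
  obtain ⟨J, hJ, hJρ⟩ := Set.Nonempty.csSup_mem (s := {t : ℝ | ∃ I : Finset (Fin n), #I = k ∧
    t = (trace (projSum v I * ρ)).re}) ⟨_, I, hI, rfl⟩ (finite_projWeight_card_eq v ρ k)
  exact ⟨J, hJ, hJρ⟩

lemma projSum_univ_of_orthonormal
    (hv : ∀ i j, star (v i) ⬝ᵥ v j = if i = j then (1 : ℂ) else 0) :
    projSum v univ = 1 := by
  have hrows : of v * (of v)ᴴ = 1 := by
    ext i j
    simpa [mul_apply, dotProduct, mul_comm, one_apply, eq_comm] using hv j i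
  rw [← transpose_one, ← mul_eq_one_comm.mp hrows]
  ext i j
  simp [projSum, mul_apply, Matrix.sum_apply, vecMulVec_apply, mul_comm]

lemma projWeight_univ_of_orthonormal
    (hv : ∀ i j, star (v i) ⬝ᵥ v j = if i = j then (1 : ℂ) else 0) (hρ : trace ρ = 1) :
    projWeight v ρ univ = 1 := by
  simp [projWeight, projSum_univ_of_orthonormal v hv, hρ]

end projWeight

section IsMaxWeight

variable {n : ℕ} {v : Fin n → Fin n → ℂ} {S : Set (Matrix (Fin n) (Fin n) ℂ)} {s : ℕ → ℝ}

lemma IsMaxWeight.projWeight_le (hs : IsMaxWeight v S s) {ρ : Matrix (Fin n) (Fin n) ℂ}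
    (hρ : ρ ∈ S) {I : Finset (Fin n)} (hI : 1 ≤ #I) : projWeight v ρ I ≤ s #I :=
  (projWeight_le_innerMax v ρ rfl).trans ((hs _ hI (card_le_univ I |>.trans_eq (card_fin n))).2
    ⟨ρ, hρ, rfl⟩)

lemma IsMaxWeight.exists_eq_projWeight (hs : IsMaxWeight v S s) {k : ℕ} (hk₁ : 1 ≤ k)
    (hkn : k ≤ n) : ∃ ρ ∈ S, ∃ I : Finset (Fin n), #I = k ∧ s k = projWeight v ρ I := by
  obtain ⟨ρ, hρ, hsρ⟩ := (hs k hk₁ hkn).1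
  obtain ⟨I, hI, hIρ⟩ := exists_innerMax_eq_projWeight v ρ hkn
  exact ⟨ρ, hρ, I, hI, hsρ.trans hIρ⟩

lemma IsMaxWeight.add_le (hs : IsMaxWeight v S s) {a b : ℕ} (ha : 1 ≤ a) (hb : 1 ≤ b)
    (hab : a + b ≤ n) : s (a + b) ≤ s a + s b := by
  obtain ⟨ρ, hρ, I, hI, hsI⟩ := hs.exists_eq_projWeight (by omega) hab
  obtain ⟨J, hJI, hJ⟩ := exists_subset_card_eq (s := I) (n := a) (by omega)
  have hIJ : #(I \ J) = b := by rw [card_sdiff_of_subset hJI]; omega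
  calc s (a + b) = projWeight v ρ J + projWeight v ρ (I \ J) := by
        rw [hsI, projWeight_eq_sum, projWeight_eq_sum, projWeight_eq_sum, add_comm,
          sum_sdiff hJI]
    _ ≤ s a + s b := by
        gcongr
        · simpa [hJ] using hs.projWeight_le hρ (I := J) (by omega)
        · simpa [hIJ] using hs.projWeight_le hρ (I := I \ J) (by omega)

end IsMaxWeight

lemma add_sum_le_of_pair_le (t : Fin 3 → ℝ) {c : ℝ} (h : ∀ i j, i ≠ j → t i + t j ≤ c)
    (ℓ : Fin 3) : t ℓ + ∑ i, t i ≤ 2 * c := by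
  have := h 0 1 (by decide)
  have := h 0 2 (by decide)
  have := h 1 2 (by decide)
  fin_cases ℓ <;> simp only [Fin.sum_univ_three, Fin.zero_eta, Fin.mk_one, Fin.reduceFinMk] <;>
    linarith

lemma IsMaxWeight.one_add_three_le {v : Fin 3 → Fin 3 → ℂ} {S : Set (Matrix (Fin 3) (Fin 3) ℂ)}
    {s : ℕ → ℝ} (hs : IsMaxWeight v S s) (htr : ∀ ρ ∈ S, trace ρ = 1)
    (hv : ∀ i j, star (v i) ⬝ᵥ v j = if i = j then (1 : ℂ) else 0) :
    s 1 + s 3 ≤ 2 * s 2 := by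
  obtain ⟨ρ, hρ, I, hI, hs₁⟩ := hs.exists_eq_projWeight le_rfl (by norm_num)
  obtain ⟨ℓ, rfl⟩ := card_eq_one.mp hI
  have hs₃ : s 3 ≤ ∑ i, projWeight v ρ {i} := by
    obtain ⟨ρ', hρ', I', hI', hs₃⟩ := hs.exists_eq_projWeight (by norm_num) le_rfl
    rw [hs₃, eq_univ_of_card I' (by simpa using hI'), projWeight_univ_of_orthonormal v ρ' hv
      (htr ρ' hρ'), ← projWeight_eq_sum, projWeight_univ_of_orthonormal v ρ hv (htr ρ hρ)]
  have hpair : ∀ i j, i ≠ j → projWeight v ρ {i} + projWeight v ρ {j} ≤ s 2 := fun i j hij ↦ by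
    simpa [projWeight_eq_sum v ρ {i, j}, sum_pair hij, card_pair hij]
      using hs.projWeight_le hρ (I := {i, j}) (by simp [card_pair hij])
  have := add_sum_le_of_pair_le _ hpair ℓ
  rw [hs₁]
  linarith

lemma sub_le_sub_of_two_mul_le {n : ℕ} {s : ℕ → ℝ}
    (hs : ∀ k, k + 2 ≤ n → s (k + 2) + s k ≤ 2 * s (k + 1)) {j k : ℕ} (hjk : j ≤ k)
    (hk : k + 1 ≤ n) : s (k + 1) - s k ≤ s (j + 1) - s j := by
  induction k, hjk using Nat.le_induction with
  | base => exact le_rfl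
  | succ k _ ih => linarith [hs k hk, ih (by omega)]

theorem upper_bound_sorted_low_dim_general {n : ℕ} (hn : n = 2 ∨ n = 3)
    (S : Set (Matrix (Fin n) (Fin n) ℂ))
    (hdens : ∀ ρ ∈ S, ρ.PosSemidef ∧ Matrix.trace ρ = 1)
    (v : Fin n → Fin n → ℂ)
    (hv : ∀ i j, star (v i) ⬝ᵥ v j = if i = j then (1 : ℂ) else 0)
    (s : ℕ → ℝ) (hs0 : s 0 = 0)
    (hs : ∀ k, 1 ≤ k → k ≤ n → IsGreatest {t : ℝ | ∃ ρ ∈ S, t = innerMax v ρ k} (s k)) :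
    s 2 ≤ 2 * s 1 ∧ (n = 3 → s 1 + s 3 ≤ 2 * s 2) ∧
      (∀ j k : Fin n, j ≤ k →
        s ((k : ℕ) + 1) - s (k : ℕ) ≤ s ((j : ℕ) + 1) - s (j : ℕ)) := by
  have hs : IsMaxWeight v S s := hs
  have h21 : s 2 ≤ 2 * s 1 := by
    have := hs.add_le le_rfl le_rfl (by omega)
    linarith
  have h32 : n = 3 → s 1 + s 3 ≤ 2 * s 2 := by
    rintro rfl
    exact hs.one_add_three_le (fun ρ hρ ↦ (hdens ρ hρ).2) hv
  refine ⟨h21, h32, fun j k hjk ↦ sub_le_sub_of_two_mul_le (n := n) ?_ hjk k.isLt⟩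
  intro m hm
  obtain rfl | rfl : m = 0 ∨ m = 1 := by omega
  · simpa [hs0] using h21
  · simpa [add_comm] using h32 (by omega)

/-- for `n = 2` or `n = 3`, with `s k = max_{ρ ∈ S} max_{|I|=k} Tr(N_I ρ)`
(attained, `s 0 = 0`), one has `2 s 1 ≥ s 2`, and for `n = 3` also `2 s 2 ≥ s 1 + s 3`;
hence the increment vector `(s 1, s 2 − s 1, …, s n − s (n-1))` is non-increasing. -/
theorem upper_bound_sorted_low_dim {n : ℕ} (hn : n = 2 ∨ n = 3)
    (S : Set (Matrix (Fin n) (Fin n) ℂ)) (hne : S.Nonempty)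
    (hdens : ∀ ρ ∈ S, ρ.PosSemidef ∧ Matrix.trace ρ = 1)
    (v : Fin n → Fin n → ℂ)
    (hv : ∀ i j, star (v i) ⬝ᵥ v j = if i = j then (1 : ℂ) else 0)
    (s : ℕ → ℝ) (hs0 : s 0 = 0)
    (hs : ∀ k, 1 ≤ k → k ≤ n → IsGreatest {t : ℝ | ∃ ρ ∈ S, t = innerMax v ρ k} (s k)) :
    s 2 ≤ 2 * s 1 ∧ (n = 3 → s 1 + s 3 ≤ 2 * s 2) ∧
      (∀ j k : Fin n, j ≤ k →
        s ((k : ℕ) + 1) - s (k : ℕ) ≤ s ((j : ℕ) + 1) - s (j : ℕ)) :=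
  upper_bound_sorted_low_dim_general hn S hdens v hv s hs0 hs
end

section
/- Flatness process yields a valid upper bound: Let S_1, ..., S_n be reals with partial sums s_k = Σ_{m≤k} S_m, and suppose j is the smallest index in {2,...,n} with S_j > S_{j−1}, and i is the greatest index in {1,...,j−1} with S_{i−1} ≥ a, where a = (Σ_{m=i}^j S_m)/(j − i + 1). Define T_m = a for i ≤ m ≤ j and T_m = S_m otherwise, with partial sums t_k. Then t_k ≥ s_k for all k, with equality for k < i and k ≥ j, and consequently any probability vector q with Σ of k largest entries of q ≤ s_k for all k also satisfies q ≺ t = (T_1, ..., T_n). -/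
open Finset

/-- the flatness process yields a valid upper bound.  Here
`S 1, …, S n` are reals with partial sums `s k = ∑_{m ≤ k} S m`; `j` is the smallest
index in `{2, …, n}` with `S j > S (j-1)`; `a` is the average of `S i, …, S j`; `i` is
the greatest index in `{1, …, j-1}` with `S (i-1) ≥ a`; `T` replaces `S i, …, S j` by
`a`, with partial sums `t k`.  Then `t k ≥ s k` with equality for `k < i` and `k ≥ j`,
and any probability vector `q` whose sums of `k` largest entries are at most `s k`
is majorized by `(T 1, …, T n)`. -/
theorem flatness_process_upper_bound (n : ℕ) (S : ℕ → ℝ) (s : ℕ → ℝ)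
    (hs : ∀ k, s k = ∑ m ∈ Finset.Icc 1 k, S m) (hsn : s n = 1)
    (i j : ℕ) (a : ℝ)
    (hj1 : 2 ≤ j) (hj2 : j ≤ n) (hjviol : S (j - 1) < S j)
    (hjmin : ∀ m, 2 ≤ m → m < j → S m ≤ S (m - 1))
    (ha : a = (∑ m ∈ Finset.Icc i j, S m) / ((j - i + 1 : ℕ) : ℝ))
    (hi1 : 1 ≤ i) (hi2 : i ≤ j - 1) (hia : i = 1 ∨ a ≤ S (i - 1))
    (himax : ∀ m, i < m → m ≤ j - 1 → S (m - 1) < a)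
    (T : ℕ → ℝ) (hT : ∀ m, T m = if i ≤ m ∧ m ≤ j then a else S m)
    (t : ℕ → ℝ) (ht : ∀ k, t k = ∑ m ∈ Finset.Icc 1 k, T m) :
    (∀ k ≤ n, s k ≤ t k) ∧ (∀ k < i, t k = s k) ∧
    (∀ k, j ≤ k → k ≤ n → t k = s k) ∧
    (∀ q : Fin n → ℝ, ProbVec q → (∀ k ≤ n, pMax q k ≤ s k) →
      Maj q (fun m : Fin n => T ((m : ℕ) + 1))) := by

  have hij : i ≤ j := by omega
  -- the sum of (a - S m) over Icc i j is zero
  have hc : ((j - i + 1 : ℕ) : ℝ) ≠ 0 := by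
    have : (0:ℕ) < j - i + 1 := by omega
    exact_mod_cast Nat.pos_iff_ne_zero.mp this
  have hsum : ∑ m ∈ Finset.Icc i j, S m = ((j - i + 1 : ℕ) : ℝ) * a := by
    rw [eq_div_iff hc] at ha; rw [← ha]; ring
  have e0 : ∑ m ∈ Finset.Icc i j, (a - S m) = 0 := by
    rw [Finset.sum_sub_distrib, Finset.sum_const, Nat.card_Icc, hsum, nsmul_eq_mul]
    have : ((j + 1 - i : ℕ) : ℝ) = ((j - i + 1 : ℕ) : ℝ) := by
      congr 1; omega
    rw [this]; ring
  have hlt : ∀ m, i ≤ m → m ≤ j - 2 → S m < a := by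
    intro m h1 h2
    have := himax (m + 1) (by omega) (by omega)
    simpa using this
  have haSj : a ≤ S j := by
    by_contra h
    push_neg at h
    have hpos : ∀ m ∈ Finset.Icc i j, 0 < a - S m := by
      intro m hm
      rw [Finset.mem_Icc] at hm
      have : m ≤ j - 2 ∨ m = j - 1 ∨ m = j := by omega
      rcases this with h' | h' | h'
      · have := hlt m hm.1 h'; linarith
      · subst h'; linarith
      · subst h'; linarith
    have hne : (Finset.Icc i j).Nonempty := ⟨j, Finset.mem_Icc.mpr ⟨hij, le_refl j⟩⟩
    have := Finset.sum_pos hpos hne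
    linarith
  have hdiff : ∀ k, t k - s k = ∑ m ∈ Finset.Icc i (min k j), (a - S m) := by
    intro k
    rw [ht, hs, ← Finset.sum_sub_distrib]
    have hcong : ∀ m ∈ Finset.Icc 1 k, T m - S m =
        if m ∈ Finset.Icc i j then a - S m else 0 := by
      intro m _
      rw [hT]
      simp only [Finset.mem_Icc]
      by_cases h : i ≤ m ∧ m ≤ j <;> simp [h]
    rw [Finset.sum_congr rfl hcong, Finset.sum_ite_mem]
    congr 1
    ext m
    simp only [Finset.mem_inter, Finset.mem_Icc]
    omega
  have part1 : ∀ k ≤ n, s k ≤ t k := by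
    intro k _
    have h := hdiff k
    rcases le_or_gt j k with hjk | hjk
    · rw [min_eq_right hjk, e0] at h; linarith
    · rw [min_eq_left (le_of_lt hjk)] at h
      rcases lt_or_ge k i with hki | hki
      · rw [Finset.Icc_eq_empty (by omega)] at h
        simp at h; linarith
      · rcases (by omega : k ≤ j - 2 ∨ k = j - 1) with hk2 | hk2
        · have : 0 ≤ ∑ m ∈ Finset.Icc i k, (a - S m) := by
            apply Finset.sum_nonneg
            intro m hm
            rw [Finset.mem_Icc] at hm
            have := hlt m hm.1 (by omega)
            linarith
          linarith
        · subst hk2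
          have hst := Finset.sum_Icc_succ_top (show i ≤ (j-1) + 1 by omega)
            (fun m => a - S m)
          rw [show (j-1) + 1 = j by omega] at hst
          rw [e0] at hst
          have : ∑ m ∈ Finset.Icc i (j-1), (a - S m) = S j - a := by linarith
          rw [this] at h
          linarith
  have part2 : ∀ k < i, t k = s k := by
    intro k hk
    have h := hdiff k
    rw [min_eq_left (by omega), Finset.Icc_eq_empty (by omega)] at h
    simp at h; linarith
  have part3 : ∀ k, j ≤ k → k ≤ n → t k = s k := by
    intro k hk _
    have h := hdiff k
    rw [min_eq_right hk, e0] at h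
    linarith
  refine ⟨part1, part2, part3, ?_⟩
  intro q hq hqs
  have htk : ∀ k, t k = ∑ m ∈ Finset.range k, T (m + 1) := by
    intro k
    rw [ht, ← Finset.Ico_add_one_right_eq_Icc, Finset.sum_Ico_eq_sum_range]
    simp [add_comm]
  constructor
  · intro k hk
    have h3 : t k ≤ pMax (fun m : Fin n => T ((m : ℕ) + 1)) k := by
      apply le_csSup
      · apply Set.Finite.bddAbove
        apply Set.Finite.subset
          (Set.finite_range (fun I : Finset (Fin n) => ∑ x ∈ I, T ((x : ℕ) + 1)))
        rintro r ⟨I, _, rfl⟩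
        exact ⟨I, rfl⟩
      · refine ⟨(Finset.univ : Finset (Fin k)).map (Fin.castLEEmb hk),
          by simp, ?_⟩
        rw [Finset.sum_map, htk]
        rw [← Fin.sum_univ_eq_sum_range (fun m => T (m + 1)) k]
        simp
    have := hqs k hk
    have := part1 k hk
    linarith
  · have h2 : ∑ m : Fin n, T ((m : ℕ) + 1) = t n := by
      rw [htk, Fin.sum_univ_eq_sum_range (fun m => T (m + 1)) n]
    have h3 : t n = 1 := by rw [part3 n hj2 (le_refl n), hsn]
    simp only []
    rw [hq.2, h2, h3]
end

section
/- Optimality of the flattened upper bound: Let Q be a set of probability vectors, s_k = sup_{q∈Q} (sum of k largest entries of q), and let t be obtained from the increments S_k = s_k − s_{k−1} by the flatness process (averaging an increasing segment S_i,...,S_j to a = (Σ_{m=i}^j S_m)/(j−i+1)). Then any probability vector y in non-increasing order satisfying q ≺ y for all q ∈ Q also satisfies t ≺ y. -/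
open Finset

/-!
For a non-increasing `y`, the sum of its `k` largest entries is the partial sum `Y k` of its first
`k` entries, and `Y` is concave in `k`; majorization of every `q ∈ Q` by `y` gives `s k ≤ Y k`.
The partial sums of `t` agree with `s` outside the flattened block and interpolate linearly between
`s (i - 1)` and `s j` inside it. As `s ≤ Y` at both ends of the block and `Y` is concave, the chord
stays below `Y`. The totals agree because `s n = 1`.
-/

lemma Fin.le_of_strictMono {k : ℕ} {g : Fin k → ℕ} (hg : StrictMono g) (r : Fin k) :
    (r : ℕ) ≤ g r := by
  obtain ⟨r, hr⟩ := r
  induction r with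
  | zero => exact Nat.zero_le _
  | succ m ih =>
    exact (ih (by omega)).trans_lt (hg (show (⟨m, by omega⟩ : Fin k) < ⟨m + 1, hr⟩ from
      Nat.lt_succ_self m))

lemma sum_le_sum_range_of_antitoneOn {n k : ℕ} {f : ℕ → ℝ} (hf : AntitoneOn f (Set.Iio n))
    (I : Finset (Fin n)) (hI : I.card = k) : ∑ v ∈ I, f v ≤ ∑ m ∈ range k, f m := by
  set e := I.orderEmbOfFin hI
  have he : StrictMono fun r => (e r : ℕ) := Fin.val_strictMono.comp e.strictMono
  calc ∑ v ∈ I, f v = ∑ r : Fin k, f (e r) := by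
        conv_lhs => rw [← I.map_orderEmbOfFin_univ hI, sum_map]
        rfl
    _ ≤ ∑ r : Fin k, f r := sum_le_sum fun r _ =>
        hf (lt_of_le_of_lt (Fin.le_of_strictMono he r) (e r).isLt) (e r).isLt
          (Fin.le_of_strictMono he r)
    _ = ∑ m ∈ range k, f m := Fin.sum_univ_eq_sum_range f k

lemma pMax_eq_sum_range {n k : ℕ} {f : ℕ → ℝ} (hf : AntitoneOn f (Set.Iio n)) (hk : k ≤ n) :
    pMax (fun m : Fin n => f m) k = ∑ m ∈ range k, f m := by
  refine IsGreatest.csSup_eq ⟨⟨univ.map (Fin.castLEEmb hk), by simp, ?_⟩, ?_⟩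
  · rw [sum_map, ← Fin.sum_univ_eq_sum_range]
    rfl
  · rintro _ ⟨I, hI, rfl⟩
    exact sum_le_sum_range_of_antitoneOn hf I hI

lemma pMax_self {n : ℕ} (x : Fin n → ℝ) : pMax x n = ∑ v, x v := by
  refine IsGreatest.csSup_eq ⟨⟨univ, by simp, rfl⟩, ?_⟩
  rintro _ ⟨I, hI, rfl⟩
  rw [(card_eq_iff_eq_univ I).1 (by simpa using hI)]

lemma Antitone.exists_antitoneOn_Iio {n : ℕ} {y : Fin n → ℝ} (hy : Antitone y) :
    ∃ f : ℕ → ℝ, AntitoneOn f (Set.Iio n) ∧ y = fun m : Fin n => f m := by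
  refine ⟨fun m => if h : m < n then y ⟨m, h⟩ else 0, fun a (ha : a < n) b (hb : b < n) hab => ?_,
    funext fun m => by simp⟩
  simp only [dif_pos ha, dif_pos hb]
  exact hy (show (⟨a, ha⟩ : Fin n) ≤ ⟨b, hb⟩ from hab)

lemma csSup_pMax_le_of_forall_maj {n k : ℕ} {Q : Set (Fin n → ℝ)} (hQ : Q.Nonempty)
    {y : Fin n → ℝ} (hmaj : ∀ q ∈ Q, Maj q y) (hk : k ≤ n) :
    sSup {u : ℝ | ∃ q ∈ Q, u = pMax q k} ≤ pMax y k := by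
  obtain ⟨q₀, hq₀⟩ := hQ
  refine csSup_le ⟨_, q₀, hq₀, rfl⟩ ?_
  rintro _ ⟨q, hq, rfl⟩
  exact (hmaj q hq).1 k hk

lemma csSup_pMax_self_of_probVec {n : ℕ} {Q : Set (Fin n → ℝ)} (hQne : Q.Nonempty)
    (hQ : ∀ q ∈ Q, ProbVec q) : sSup {u : ℝ | ∃ q ∈ Q, u = pMax q n} = 1 := by
  obtain ⟨q₀, hq₀⟩ := hQne
  refine IsGreatest.csSup_eq ⟨⟨q₀, hq₀, by rw [pMax_self, (hQ q₀ hq₀).2]⟩, ?_⟩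
  rintro _ ⟨q, hq, rfl⟩
  rw [pMax_self, (hQ q hq).2]

lemma card_mul_sum_Ico_le_of_antitoneOn {f : ℕ → ℝ} {p k r : ℕ} (hpk : p ≤ k) (hkr : k ≤ r)
    (hf : AntitoneOn f (Set.Ico p r)) :
    ((k - p : ℕ) : ℝ) * ∑ m ∈ Ico p r, f m ≤ ((r - p : ℕ) : ℝ) * ∑ m ∈ Ico p k, f m := by
  rcases hkr.eq_or_lt with rfl | hkr
  · rfl
  have hk : k ∈ Set.Ico p r := ⟨hpk, hkr⟩
  have hleft : ((k - p : ℕ) : ℝ) * f k ≤ ∑ m ∈ Ico p k, f m := by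
    simpa using card_nsmul_le_sum (Ico p k) f (f k) fun m hm => by
      rw [mem_Ico] at hm
      exact hf ⟨hm.1, by omega⟩ hk hm.2.le
  have hright : ∑ m ∈ Ico k r, f m ≤ ((r - k : ℕ) : ℝ) * f k := by
    simpa using sum_le_card_nsmul (Ico k r) f (f k) fun m hm => by
      rw [mem_Ico] at hm
      exact hf hk ⟨by omega, hm.2⟩ hm.1
  have hcard : ((r - p : ℕ) : ℝ) = ((r - k : ℕ) : ℝ) + ((k - p : ℕ) : ℝ) := by
    rw [← Nat.cast_add]; congr 1; omega
  rw [← sum_Ico_consecutive f hpk hkr.le, hcard]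
  nlinarith [mul_le_mul_of_nonneg_left hleft (Nat.cast_nonneg (r - k) : (0 : ℝ) ≤ _),
    mul_le_mul_of_nonneg_left hright (Nat.cast_nonneg (k - p) : (0 : ℝ) ≤ _)]

noncomputable def flattenIco (g : ℕ → ℝ) (p r : ℕ) (m : ℕ) : ℝ :=
  if m ∈ Ico p r then (∑ l ∈ Ico p r, g l) / (r - p : ℕ) else g m

section flattenIco

variable {g : ℕ → ℝ} {p r : ℕ}

lemma flattenIco_of_mem {m : ℕ} (hm : m ∈ Ico p r) :
    flattenIco g p r m = (∑ l ∈ Ico p r, g l) / (r - p : ℕ) :=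
  if_pos hm

lemma flattenIco_of_notMem {m : ℕ} (hm : m ∉ Ico p r) : flattenIco g p r m = g m :=
  if_neg hm

lemma sum_Ico_flattenIco : ∑ m ∈ Ico p r, flattenIco g p r m = ∑ m ∈ Ico p r, g m := by
  rcases le_or_gt r p with hrp | hpr
  · simp [Ico_eq_empty_of_le hrp]
  rw [sum_congr rfl fun m => flattenIco_of_mem, sum_const, Nat.card_Ico, nsmul_eq_mul,
    mul_div_cancel₀ _ (Nat.cast_ne_zero.2 (by omega))]

lemma sum_range_flattenIco_of_le_left {k : ℕ} (hk : k ≤ p) :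
    ∑ m ∈ range k, flattenIco g p r m = ∑ m ∈ range k, g m :=
  sum_congr rfl fun m hm => flattenIco_of_notMem fun h => by simp at hm h; omega

lemma sum_range_flattenIco_of_right_le {k : ℕ} (hpr : p ≤ r) (hk : r ≤ k) :
    ∑ m ∈ range k, flattenIco g p r m = ∑ m ∈ range k, g m := by
  rw [← sum_range_add_sum_Ico _ (hpr.trans hk), ← sum_range_add_sum_Ico _ (hpr.trans hk),
    ← sum_Ico_consecutive _ hpr hk, ← sum_Ico_consecutive _ hpr hk,
    sum_range_flattenIco_of_le_left le_rfl, sum_Ico_flattenIco,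
    sum_congr rfl fun m hm => flattenIco_of_notMem fun h => by simp at hm h; omega]

lemma sum_range_flattenIco_of_mem {k : ℕ} (hpk : p ≤ k) (hkr : k ≤ r) :
    ∑ m ∈ range k, flattenIco g p r m =
      ∑ m ∈ range p, g m + (k - p : ℕ) * ((∑ l ∈ Ico p r, g l) / (r - p : ℕ)) := by
  rw [← sum_range_add_sum_Ico _ hpk, sum_range_flattenIco_of_le_left le_rfl,
    sum_congr rfl fun m hm => flattenIco_of_mem (by simp at hm ⊢; omega), sum_const, Nat.card_Ico,
    nsmul_eq_mul]

lemma sum_range_flattenIco_le {f : ℕ → ℝ} {n : ℕ} (hpr : p ≤ r) (hrn : r ≤ n)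
    (hf : AntitoneOn f (Set.Ico p r))
    (hgf : ∀ k ≤ n, ∑ m ∈ range k, g m ≤ ∑ m ∈ range k, f m) {k : ℕ} (hk : k ≤ n) :
    ∑ m ∈ range k, flattenIco g p r m ≤ ∑ m ∈ range k, f m := by
  rcases le_or_gt k p with hkp | hpk
  · rw [sum_range_flattenIco_of_le_left hkp]; exact hgf k hk
  rcases le_or_gt r k with hrk | hkr
  · rw [sum_range_flattenIco_of_right_le hpr hrk]; exact hgf k hk
  have hchord := card_mul_sum_Ico_le_of_antitoneOn hpk.le hkr.le hf
  have hgfp := hgf p (by omega)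
  have hgfr := hgf r hrn
  rw [← sum_range_add_sum_Ico _ hpr, ← sum_range_add_sum_Ico _ hpr] at hgfr
  have hcard : ((r - p : ℕ) : ℝ) = ((r - k : ℕ) : ℝ) + ((k - p : ℕ) : ℝ) := by
    rw [← Nat.cast_add]; congr 1; omega
  have hc : (0 : ℝ) < (r - p : ℕ) := by exact_mod_cast (by omega : 0 < r - p)
  rw [sum_range_flattenIco_of_mem hpk.le hkr.le, ← sum_range_add_sum_Ico _ hpk.le,
    ← mul_le_mul_iff_right₀ hc, mul_add, mul_left_comm, mul_div_cancel₀ _ hc.ne']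
  rw [hcard] at hchord ⊢
  nlinarith [mul_le_mul_of_nonneg_left hgfp (Nat.cast_nonneg (r - k) : (0 : ℝ) ≤ _),
    mul_le_mul_of_nonneg_left hgfr (Nat.cast_nonneg (k - p) : (0 : ℝ) ≤ _)]

end flattenIco

theorem flattened_upper_bound_optimal_general {n : ℕ} (Q : Set (Fin n → ℝ)) (hQne : Q.Nonempty)
    (hQ : ∀ q ∈ Q, ProbVec q)
    (s : ℕ → ℝ) (hs0 : s 0 = 0)
    (hsdef : ∀ k ≤ n, s k = sSup {u : ℝ | ∃ q ∈ Q, u = pMax q k})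
    (S : ℕ → ℝ) (hS : ∀ m, S m = s m - s (m - 1))
    (i j : ℕ) (a : ℝ)
    (hj2 : j ≤ n)
    (ha : a = (∑ m ∈ Finset.Icc i j, S m) / ((j - i + 1 : ℕ) : ℝ))
    (hi1 : 1 ≤ i) (hi2 : i ≤ j - 1)
    (T : ℕ → ℝ) (hT : ∀ m, T m = if i ≤ m ∧ m ≤ j then a else S m)
    (hTsorted : ∀ m, 2 ≤ m → m ≤ n → T m ≤ T (m - 1)) :
    ∀ y : Fin n → ℝ, ProbVec y → (∀ b c : Fin n, b ≤ c → y c ≤ y b) →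
      (∀ q ∈ Q, Maj q y) → Maj (fun m : Fin n => T ((m : ℕ) + 1)) y := by
  intro y hy hyanti hmaj
  obtain ⟨f, hf, rfl⟩ := Antitone.exists_antitoneOn_Iio hyanti
  have ht : AntitoneOn (fun m => T (m + 1)) (Set.Iio n) :=
    antitoneOn_of_succ_le Set.ordConnected_Iio fun m _ _ hm => by
      simpa using hTsorted (m + 2) (by omega) (by simp at hm; omega)
  set g : ℕ → ℝ := fun m => S (m + 1)
  have hs : ∀ k, s k = ∑ m ∈ range k, g m := fun k => by
    simp only [g, hS, Nat.add_sub_cancel, sum_range_sub, hs0, sub_zero]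
  have hsf : ∀ k ≤ n, ∑ m ∈ range k, g m ≤ ∑ m ∈ range k, f m := fun k hk => by
    rw [← hs, hsdef k hk, ← pMax_eq_sum_range hf hk]
    exact csSup_pMax_le_of_forall_maj hQne hmaj hk
  have hblock : a = (∑ l ∈ Ico (i - 1) j, g l) / (j - (i - 1) : ℕ) := by
    rw [ha, sum_Ico_add' S, Nat.sub_add_cancel hi1, Ico_add_one_right_eq_Icc]
    congr 2
    omega
  have htg : (fun m => T (m + 1)) = flattenIco g (i - 1) j := funext fun m => by
    by_cases hm : m ∈ Ico (i - 1) j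
    · rw [flattenIco_of_mem hm, hT, if_pos (by simp at hm; omega), hblock]
    · rw [flattenIco_of_notMem hm, hT, if_neg (by simp at hm; omega)]
  refine ⟨fun k hk => ?_, ?_⟩
  · rw [pMax_eq_sum_range ht hk, pMax_eq_sum_range hf hk, htg]
    exact sum_range_flattenIco_le (by omega) hj2 (hf.mono fun m hm => hm.2.trans_le hj2) hsf hk
  · rw [Fin.sum_univ_eq_sum_range (fun m => T (m + 1)), htg,
      sum_range_flattenIco_of_right_le (by omega) hj2, ← hs, hsdef n le_rfl,
      csSup_pMax_self_of_probVec hQne hQ, hy.2]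

/-- optimality of the flattened upper bound.  With `Q` a set of
probability vectors, `s k = sup_{q ∈ Q}` (sum of `k` largest entries of `q`),
increments `S k = s k − s (k-1)`, and `t = (T 1, …, T n)` obtained by one application
of the flatness process (averaging the increasing segment `S i, …, S j` to `a`, which
we assume makes `t` non-increasing), any probability vector `y` in non-increasing
order with `q ≺ y` for all `q ∈ Q` satisfies `t ≺ y`. -/
theorem flattened_upper_bound_optimal {n : ℕ} (Q : Set (Fin n → ℝ)) (hQne : Q.Nonempty)
    (hQ : ∀ q ∈ Q, ProbVec q)
    (s : ℕ → ℝ) (hs0 : s 0 = 0)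
    (hsdef : ∀ k ≤ n, s k = sSup {u : ℝ | ∃ q ∈ Q, u = pMax q k})
    (S : ℕ → ℝ) (hS : ∀ m, S m = s m - s (m - 1))
    (i j : ℕ) (a : ℝ)
    (hj1 : 2 ≤ j) (hj2 : j ≤ n) (hjviol : S (j - 1) < S j)
    (hjmin : ∀ m, 2 ≤ m → m < j → S m ≤ S (m - 1))
    (ha : a = (∑ m ∈ Finset.Icc i j, S m) / ((j - i + 1 : ℕ) : ℝ))
    (hi1 : 1 ≤ i) (hi2 : i ≤ j - 1) (hia : i = 1 ∨ a ≤ S (i - 1))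
    (himax : ∀ m, i < m → m ≤ j - 1 → S (m - 1) < a)
    (T : ℕ → ℝ) (hT : ∀ m, T m = if i ≤ m ∧ m ≤ j then a else S m)
    (hTsorted : ∀ m, 2 ≤ m → m ≤ n → T m ≤ T (m - 1)) :
    ∀ y : Fin n → ℝ, ProbVec y → (∀ b c : Fin n, b ≤ c → y c ≤ y b) →
      (∀ q ∈ Q, Maj q y) → Maj (fun m : Fin n => T ((m : ℕ) + 1)) y :=
  flattened_upper_bound_optimal_general Q hQne hQ s hs0 hsdef S hS i j a hj2 ha hi1 hi2 T hT
    hTsorted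
end

section
/- Qubit upper bound: Let M = {|0⟩, |1⟩} and N = {cosθ|0⟩ − sinθ|1⟩, sinθ|0⟩ + cosθ|1⟩} with θ ∈ [0, π/2]. For λ ∈ (0, 1/2), over all density matrices ρ on ℂ² with ⟨0|ρ|0⟩ = λ and ⟨1|ρ|1⟩ = 1 − λ, the maximum of max{⟨v_1|ρ|v_1⟩, ⟨v_2|ρ|v_2⟩} equals (√λ sinθ + √(1−λ) cosθ)² if θ ∈ [0, π/4), and (√(1−λ) sinθ + √λ cosθ)² if θ ∈ [π/4, π/2]. -/
open Matrix ComplexOrder Real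

/-- Measurement outcome probability `⟨v|ρ|v⟩` (real part). -/
noncomputable def outcome (ρ : Matrix (Fin 2) (Fin 2) ℂ) (v : Fin 2 → ℂ) : ℝ :=
  (star v ⬝ᵥ ρ.mulVec v).re

/-! For a real vector `(a, b)`, `⟨v|ρ|v⟩ = a²λ + b²(1 - λ) + 2ab Re ρ₀₁`, and `det ρ ≥ 0` gives
`(Re ρ₀₁)² ≤ λ(1 - λ)`; hence `⟨v|ρ|v⟩ ≤ (√λ |a| + √(1 - λ) |b|)²`, with equality for the pure
state `(√λ, ±√(1 - λ))` of the matching sign. Since `√λ ≤ √(1 - λ)`, the rearrangement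
inequality decides which of the bounds for `v₁ = (c, -s)` and `v₂ = (s, c)` is the larger,
according to the order of `s = sin θ` and `c = cos θ`, and that one is attained. -/

namespace Matrix

variable {ρ : Matrix (Fin 2) (Fin 2) ℂ}

lemma IsHermitian.im_apply_self (hρ : ρ.IsHermitian) (i : Fin 2) : (ρ i i).im = 0 :=
  Complex.conj_eq_iff_im.mp (hρ.apply i i)

lemma IsHermitian.re_apply_one_zero (hρ : ρ.IsHermitian) : (ρ 1 0).re = (ρ 0 1).re := by
  rw [← hρ.apply 0 1, Complex.star_def, Complex.conj_re]

lemma PosSemidef.re_apply_zero_one_sq_le (hρ : ρ.PosSemidef) :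
    (ρ 0 1).re ^ 2 ≤ (ρ 0 0).re * (ρ 1 1).re := by
  have hdet := (Complex.nonneg_iff.mp hρ.det_nonneg).1
  have h10 : ρ 1 0 = star (ρ 0 1) := (hρ.1.apply 1 0).symm
  rw [det_fin_two, h10, Complex.star_def, Complex.mul_conj] at hdet
  simp only [Complex.sub_re, Complex.mul_re, hρ.1.im_apply_self, mul_zero, sub_zero,
    Complex.ofReal_re, Complex.normSq_apply] at hdet
  nlinarith [sq_nonneg (ρ 0 1).im]

end Matrix

lemma outcome_ofReal_vec {ρ : Matrix (Fin 2) (Fin 2) ℂ} (hρ : ρ.IsHermitian) (a b : ℝ) :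
    outcome ρ ![(a : ℂ), b] =
      a ^ 2 * (ρ 0 0).re + b ^ 2 * (ρ 1 1).re + 2 * a * b * (ρ 0 1).re := by
  simp only [outcome, dotProduct, Pi.star_apply, RCLike.star_def, mulVec, Fin.sum_univ_two,
    cons_val_zero, cons_val_one, cons_val_fin_one, Complex.conj_ofReal, Complex.add_re,
    Complex.mul_re, Complex.ofReal_re, Complex.ofReal_im, hρ.im_apply_self, hρ.re_apply_one_zero,
    mul_zero, zero_mul, sub_zero]
  ring

lemma outcome_le_sq {ρ : Matrix (Fin 2) (Fin 2) ℂ} (hρ : ρ.PosSemidef) (a b : ℝ) :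
    outcome ρ ![(a : ℂ), b] ≤ (√(ρ 0 0).re * |a| + √(ρ 1 1).re * |b|) ^ 2 := by
  have h00 : 0 ≤ (ρ 0 0).re := (Complex.nonneg_iff.mp hρ.diag_nonneg).1
  have h11 : 0 ≤ (ρ 1 1).re := (Complex.nonneg_iff.mp hρ.diag_nonneg).1
  have hx : |(ρ 0 1).re| ≤ √(ρ 0 0).re * √(ρ 1 1).re := by
    rw [← sqrt_mul h00]
    exact abs_le_sqrt hρ.re_apply_zero_one_sq_le
  have hcross : a * b * (ρ 0 1).re ≤ |a| * |b| * (√(ρ 0 0).re * √(ρ 1 1).re) :=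
    calc a * b * (ρ 0 1).re ≤ |a * b * (ρ 0 1).re| := le_abs_self _
      _ = |a| * |b| * |(ρ 0 1).re| := by rw [abs_mul, abs_mul]
      _ ≤ _ := by gcongr
  rw [outcome_ofReal_vec hρ.1]
  nlinarith [sq_abs a, sq_abs b, sq_sqrt h00, sq_sqrt h11]

noncomputable def realPureState (p q : ℝ) : Matrix (Fin 2) (Fin 2) ℂ :=
  vecMulVec ![(p : ℂ), q] (star ![(p : ℂ), q])

lemma realPureState_posSemidef (p q : ℝ) : (realPureState p q).PosSemidef :=
  posSemidef_vecMulVec_self_star _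

lemma realPureState_apply (p q : ℝ) (i j : Fin 2) :
    realPureState p q i j = ((![p, q] i * ![p, q] j : ℝ) : ℂ) := by
  fin_cases i <;> fin_cases j <;> simp [realPureState, vecMulVec_apply]

lemma outcome_realPureState (p q a b : ℝ) :
    outcome (realPureState p q) ![(a : ℂ), b] = (a * p + b * q) ^ 2 := by
  rw [outcome_ofReal_vec (realPureState_posSemidef p q).1]
  simp only [realPureState_apply, Complex.ofReal_re, cons_val_zero, cons_val_one]
  ring

section DiagonalConstraint

variable {lam : ℝ}

def maxOutcomeValues (lam : ℝ) (v₁ v₂ : Fin 2 → ℂ) : Set ℝ :=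
  {t : ℝ | ∃ ρ : Matrix (Fin 2) (Fin 2) ℂ, ρ.PosSemidef ∧
    ρ 0 0 = (lam : ℂ) ∧ ρ 1 1 = ((1 - lam : ℝ) : ℂ) ∧
    t = max (outcome ρ v₁) (outcome ρ v₂)}

lemma isGreatest_maxOutcomeValues {B : ℝ} {v₁ v₂ : Fin 2 → ℂ}
    (hle : ∀ ρ : Matrix (Fin 2) (Fin 2) ℂ, ρ.PosSemidef → ρ 0 0 = (lam : ℂ) →
      ρ 1 1 = ((1 - lam : ℝ) : ℂ) → outcome ρ v₁ ≤ B ∧ outcome ρ v₂ ≤ B)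
    (hex : ∃ ρ : Matrix (Fin 2) (Fin 2) ℂ, ρ.PosSemidef ∧ ρ 0 0 = (lam : ℂ) ∧
      ρ 1 1 = ((1 - lam : ℝ) : ℂ) ∧ (B ≤ outcome ρ v₁ ∨ B ≤ outcome ρ v₂)) :
    IsGreatest (maxOutcomeValues lam v₁ v₂) B := by
  refine ⟨?_, ?_⟩
  · obtain ⟨ρ, hρ, h0, h1, hB⟩ := hex
    refine ⟨ρ, hρ, h0, h1, le_antisymm ?_ (max_le (hle ρ hρ h0 h1).1 (hle ρ hρ h0 h1).2)⟩
    exact hB.elim (fun h => h.trans (le_max_left _ _)) (fun h => h.trans (le_max_right _ _))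
  · rintro t ⟨ρ, hρ, h0, h1, rfl⟩
    exact max_le (hle ρ hρ h0 h1).1 (hle ρ hρ h0 h1).2

lemma outcome_le_of_diag {ρ : Matrix (Fin 2) (Fin 2) ℂ} (hρ : ρ.PosSemidef)
    (h0 : ρ 0 0 = (lam : ℂ)) (h1 : ρ 1 1 = ((1 - lam : ℝ) : ℂ)) (a b : ℝ) :
    outcome ρ ![(a : ℂ), b] ≤ (√lam * |a| + √(1 - lam) * |b|) ^ 2 := by
  simpa only [h0, h1, Complex.ofReal_re] using outcome_le_sq hρ a b

lemma realPureState_sqrt_diag {q : ℝ} (hl0 : 0 ≤ lam) (hq : q ^ 2 = 1 - lam) :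
    realPureState √lam q 0 0 = (lam : ℂ) ∧ realPureState √lam q 1 1 = ((1 - lam : ℝ) : ℂ) := by
  simp only [realPureState_apply, cons_val_zero, cons_val_one, ← sq, sq_sqrt hl0, hq, and_self]

variable {s c : ℝ}

lemma isGreatest_maxOutcomeValues_of_le (hl0 : 0 ≤ lam) (hl1 : lam ≤ 1 / 2)
    (hs : 0 ≤ s) (hsc : s ≤ c) :
    IsGreatest (maxOutcomeValues lam ![(c : ℂ), -(s : ℂ)] ![(s : ℂ), (c : ℂ)])
      ((√lam * s + √(1 - lam) * c) ^ 2) := by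
  have hc : 0 ≤ c := hs.trans hsc
  have hsqrt : √lam ≤ √(1 - lam) := sqrt_le_sqrt (by linarith)
  obtain ⟨hw0, hw1⟩ := realPureState_sqrt_diag hl0 (sq_sqrt (by linarith : 0 ≤ 1 - lam))
  refine isGreatest_maxOutcomeValues (fun ρ hρ h0 h1 => ⟨?_, ?_⟩)
    ⟨_, realPureState_posSemidef _ _, hw0, hw1, Or.inr ?_⟩
  · calc outcome ρ ![(c : ℂ), -(s : ℂ)] ≤ (√lam * c + √(1 - lam) * s) ^ 2 := by
          simpa [abs_of_nonneg hs, abs_of_nonneg hc] using outcome_le_of_diag hρ h0 h1 c (-s)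
      _ ≤ _ := pow_le_pow_left₀ (by positivity) (mul_add_mul_le_mul_add_mul hsqrt hsc) 2
  · simpa [abs_of_nonneg hs, abs_of_nonneg hc] using outcome_le_of_diag hρ h0 h1 s c
  · exact le_of_eq (by rw [outcome_realPureState]; ring)

lemma isGreatest_maxOutcomeValues_of_ge (hl0 : 0 ≤ lam) (hl1 : lam ≤ 1 / 2)
    (hc : 0 ≤ c) (hcs : c ≤ s) :
    IsGreatest (maxOutcomeValues lam ![(c : ℂ), -(s : ℂ)] ![(s : ℂ), (c : ℂ)])
      ((√(1 - lam) * s + √lam * c) ^ 2) := by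
  have hs : 0 ≤ s := hc.trans hcs
  have hsqrt : √lam ≤ √(1 - lam) := sqrt_le_sqrt (by linarith)
  obtain ⟨hw0, hw1⟩ := realPureState_sqrt_diag hl0
    (by rw [neg_sq, sq_sqrt (by linarith)] : (-√(1 - lam)) ^ 2 = 1 - lam)
  refine isGreatest_maxOutcomeValues (fun ρ hρ h0 h1 => ⟨?_, ?_⟩)
    ⟨_, realPureState_posSemidef _ _, hw0, hw1, Or.inl ?_⟩
  · simpa [abs_of_nonneg hs, abs_of_nonneg hc, add_comm] using
      outcome_le_of_diag hρ h0 h1 c (-s)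
  · calc outcome ρ ![(s : ℂ), (c : ℂ)] ≤ (√lam * s + √(1 - lam) * c) ^ 2 := by
          simpa [abs_of_nonneg hs, abs_of_nonneg hc] using outcome_le_of_diag hρ h0 h1 s c
      _ ≤ (√lam * c + √(1 - lam) * s) ^ 2 :=
          pow_le_pow_left₀ (by positivity) (mul_add_mul_le_mul_add_mul hsqrt hcs) 2
      _ = _ := by ring
  · rw [← Complex.ofReal_neg, outcome_realPureState]
    exact le_of_eq (by ring)

end DiagonalConstraint

lemma sin_le_cos_of_le_pi_div_four {θ : ℝ} (h0 : 0 ≤ θ) (h : θ ≤ π / 4) : sin θ ≤ cos θ := by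
  rw [← sin_pi_div_two_sub]
  exact sin_le_sin_of_le_of_le_pi_div_two (by linarith [pi_pos]) (by linarith) (by linarith)

lemma cos_le_sin_of_pi_div_four_le {θ : ℝ} (h : π / 4 ≤ θ) (h1 : θ ≤ π / 2) : cos θ ≤ sin θ := by
  rw [← sin_pi_div_two_sub]
  exact sin_le_sin_of_le_of_le_pi_div_two (by linarith [pi_pos]) h1 (by linarith)

/-- qubit upper bound.  With `N = {v₁, v₂}` the rotated basis and `ρ`
ranging over density matrices with diagonal `(λ, 1-λ)` in the computational basis,
the maximum of `max{⟨v₁|ρ|v₁⟩, ⟨v₂|ρ|v₂⟩}` equals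
`(√λ sinθ + √(1−λ) cosθ)²` for `θ ∈ [0, π/4)` and
`(√(1−λ) sinθ + √λ cosθ)²` for `θ ∈ [π/4, π/2]`. -/
theorem qubit_upper_bound (θ lam : ℝ) (hθ0 : 0 ≤ θ) (hθ1 : θ ≤ π / 2)
    (hl0 : 0 < lam) (hl1 : lam < 1 / 2)
    (v₁ v₂ : Fin 2 → ℂ)
    (hv₁ : v₁ = ![(Real.cos θ : ℂ), (-(Real.sin θ) : ℂ)])
    (hv₂ : v₂ = ![(Real.sin θ : ℂ), (Real.cos θ : ℂ)]) :
    (θ < π / 4 →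
      IsGreatest {t : ℝ | ∃ ρ : Matrix (Fin 2) (Fin 2) ℂ, ρ.PosSemidef ∧
          ρ 0 0 = (lam : ℂ) ∧ ρ 1 1 = ((1 - lam : ℝ) : ℂ) ∧
          t = max (outcome ρ v₁) (outcome ρ v₂)}
        ((Real.sqrt lam * Real.sin θ + Real.sqrt (1 - lam) * Real.cos θ) ^ 2)) ∧
    (π / 4 ≤ θ →
      IsGreatest {t : ℝ | ∃ ρ : Matrix (Fin 2) (Fin 2) ℂ, ρ.PosSemidef ∧
          ρ 0 0 = (lam : ℂ) ∧ ρ 1 1 = ((1 - lam : ℝ) : ℂ) ∧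
          t = max (outcome ρ v₁) (outcome ρ v₂)}
        ((Real.sqrt (1 - lam) * Real.sin θ + Real.sqrt lam * Real.cos θ) ^ 2)) := by
  subst hv₁ hv₂
  have hsin : 0 ≤ sin θ := sin_nonneg_of_nonneg_of_le_pi hθ0 (by linarith [pi_pos])
  have hcos : 0 ≤ cos θ := cos_nonneg_of_mem_Icc ⟨by linarith [pi_pos], hθ1⟩
  exact ⟨fun hθ => isGreatest_maxOutcomeValues_of_le hl0.le hl1.le hsin
      (sin_le_cos_of_le_pi_div_four hθ0 hθ.le),
    fun hθ => isGreatest_maxOutcomeValues_of_ge hl0.le hl1.le hcos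
      (cos_le_sin_of_pi_div_four_le hθ hθ1)⟩
end

section
/- Qubit lower bound: With M, N, λ, θ as in the qubit setting, the minimum over density matrices ρ with diagonal (λ, 1−λ) in the M basis of max{⟨v_1|ρ|v_1⟩, ⟨v_2|ρ|v_2⟩} equals (√(1−λ) sinθ − √λ cosθ)² when cot(2θ) < −2√(λ(1−λ))/(1−2λ); equals 1/2 when |cot(2θ)| ≤ 2√(λ(1−λ))/(1−2λ); and equals (√λ sinθ − √(1−λ) cosθ)² when cot(2θ) > 2√(λ(1−λ))/(1−2λ). -/
/-!
With `x = Re ρ₀₁`, `⟨v₁|ρ|v₁⟩ = p := λ cos²θ + (1 - λ) sin²θ - x sin 2θ`, and since `v₁, v₂` is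
an orthonormal basis and `tr ρ = 1`, `⟨v₂|ρ|v₂⟩ = 1 - p`. Positivity of `ρ` forces
`x² ≤ λ(1 - λ)`, and every such `x` is realised by a real density matrix, so `p` sweeps an interval
of radius `√(λ(1 - λ)) sin 2θ`. The minimum of `max p (1 - p)` over an interval is its left end,
`1/2` or one minus its right end according to where `1/2` lies, and the three regimes of `cot 2θ`
are exactly these three positions of `1/2`.
-/

open Matrix ComplexOrder Real

lemma Matrix.PosSemidef.re_apply_zero_one_sq_le_s16 {ρ : Matrix (Fin 2) (Fin 2) ℂ}
    (hρ : ρ.PosSemidef) : (ρ 0 1).re ^ 2 ≤ (ρ 0 0).re * (ρ 1 1).re := by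
  have hdet := (Complex.nonneg_iff.mp hρ.det_nonneg).1
  have h10 : ρ 1 0 = star (ρ 0 1) := (hρ.isHermitian.apply 1 0).symm
  have h00 : (ρ 0 0).im = 0 := Complex.conj_eq_iff_im.mp (hρ.isHermitian.apply 0 0)
  have h11 : (ρ 1 1).im = 0 := Complex.conj_eq_iff_im.mp (hρ.isHermitian.apply 1 1)
  simp only [det_fin_two, h10, Complex.sub_re, Complex.mul_re, h00, h11, Complex.star_def,
    Complex.conj_re, Complex.conj_im] at hdet
  nlinarith [sq_nonneg (ρ 0 1).im]

/-- Rank one plus diagonal: `!![a, b; b, c] = a⁻¹ • (a, b)(a, b)ᴴ + diag (0, c - b² / a)`. -/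
lemma posSemidef_ofReal_fin_two {a b c : ℝ} (ha : 0 < a) (h : b ^ 2 ≤ a * c) :
    !![(a : ℂ), (b : ℂ); (b : ℂ), (c : ℂ)].PosSemidef := by
  have hrank : (vecMulVec ![(a : ℂ), (b : ℂ)] (star ![(a : ℂ), (b : ℂ)])).PosSemidef :=
    posSemidef_vecMulVec_self_star _
  have hdiag : (diagonal ![(0 : ℂ), ((c - b ^ 2 / a : ℝ) : ℂ)]).PosSemidef := by
    refine PosSemidef.diagonal fun i => ?_
    fin_cases i
    · simp
    · have : 0 ≤ c - b ^ 2 / a := by rw [sub_nonneg, div_le_iff₀ ha]; linarith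
      exact Complex.zero_le_real.mpr this
  convert (hrank.smul (a := ((a⁻¹ : ℝ) : ℂ)) (by simpa using ha.le)).add hdiag using 1
  ext i j
  fin_cases i <;> fin_cases j <;> simp [vecMulVec] <;> field_simp
  ring

lemma outcome_ofReal {ρ : Matrix (Fin 2) (Fin 2) ℂ} (hρ : ρ.IsHermitian) (u w : ℝ) :
    outcome ρ ![(u : ℂ), (w : ℂ)] =
      (ρ 0 0).re * u ^ 2 + (ρ 1 1).re * w ^ 2 + 2 * (ρ 0 1).re * u * w := by
  have h10 : ρ 1 0 = star (ρ 0 1) := (hρ.apply 1 0).symm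
  simp only [outcome, dotProduct, Pi.star_apply, RCLike.star_def, mulVec, Fin.sum_univ_two,
    Fin.isValue, cons_val_zero, cons_val_one, cons_val_fin_one, Complex.conj_ofReal, h10,
    Complex.add_re, Complex.mul_re, Complex.ofReal_re, Complex.ofReal_im, mul_zero, sub_zero,
    Complex.add_im, Complex.mul_im, zero_add, zero_mul, Complex.conj_re, Complex.conj_im, neg_mul]
  ring

section RotatedBasis

variable {ρ : Matrix (Fin 2) (Fin 2) ℂ} {lam θ : ℝ}

lemma outcome_rotated_fst (hρ : ρ.IsHermitian) (h00 : ρ 0 0 = (lam : ℂ))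
    (h11 : ρ 1 1 = ((1 - lam : ℝ) : ℂ)) :
    outcome ρ ![(cos θ : ℂ), (-(sin θ) : ℂ)] =
      lam * cos θ ^ 2 + (1 - lam) * sin θ ^ 2 - (ρ 0 1).re * sin (2 * θ) := by
  rw [← Complex.ofReal_neg, outcome_ofReal hρ, h00, h11, sin_two_mul]
  simp only [Complex.ofReal_re]
  ring

lemma outcome_rotated_snd (hρ : ρ.IsHermitian) (h00 : ρ 0 0 = (lam : ℂ))
    (h11 : ρ 1 1 = ((1 - lam : ℝ) : ℂ)) :
    outcome ρ ![(sin θ : ℂ), (cos θ : ℂ)] = 1 - outcome ρ ![(cos θ : ℂ), (-(sin θ) : ℂ)] := by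
  rw [outcome_rotated_fst hρ h00 h11, outcome_ofReal hρ, h00, h11, sin_two_mul]
  simp only [Complex.ofReal_re]
  linear_combination (1 - lam) * sin_sq_add_cos_sq θ + lam * cos_sq_add_sin_sq θ

end RotatedBasis

lemma setOf_max_outcome_rotated_eq_image_Icc {lam θ : ℝ} (hl0 : 0 < lam) (hl1 : lam ≤ 1)
    (hs : 0 < sin (2 * θ)) :
    {t : ℝ | ∃ ρ : Matrix (Fin 2) (Fin 2) ℂ, ρ.PosSemidef ∧
        ρ 0 0 = (lam : ℂ) ∧ ρ 1 1 = ((1 - lam : ℝ) : ℂ) ∧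
        t = max (outcome ρ ![(cos θ : ℂ), (-(sin θ) : ℂ)])
          (outcome ρ ![(sin θ : ℂ), (cos θ : ℂ)])} =
      (fun p => max p (1 - p)) ''
        Set.Icc (lam * cos θ ^ 2 + (1 - lam) * sin θ ^ 2 - √(lam * (1 - lam)) * sin (2 * θ))
          (lam * cos θ ^ 2 + (1 - lam) * sin θ ^ 2 + √(lam * (1 - lam)) * sin (2 * θ)) := by
  have hlam : 0 ≤ lam * (1 - lam) := mul_nonneg hl0.le (sub_nonneg.mpr hl1)
  ext t
  constructor
  · rintro ⟨ρ, hρ, h00, h11, rfl⟩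
    refine ⟨_, ?_, by rw [outcome_rotated_snd hρ.isHermitian h00 h11]⟩
    have hx := hρ.re_apply_zero_one_sq_le_s16
    rw [h00, h11, Complex.ofReal_re, Complex.ofReal_re] at hx
    obtain ⟨hlo, hhi⟩ := (Real.sq_le hlam).mp hx
    rw [outcome_rotated_fst hρ.isHermitian h00 h11]
    constructor <;> nlinarith
  · rintro ⟨p, ⟨hlo, hhi⟩, rfl⟩
    set x := (lam * cos θ ^ 2 + (1 - lam) * sin θ ^ 2 - p) / sin (2 * θ) with hx
    have hx2 : x ^ 2 ≤ lam * (1 - lam) := by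
      rw [Real.sq_le hlam, hx, le_div_iff₀ hs, div_le_iff₀ hs]
      constructor <;> linarith
    have hρ := posSemidef_ofReal_fin_two hl0 hx2
    refine ⟨_, hρ, rfl, rfl, ?_⟩
    have hp : lam * cos θ ^ 2 + (1 - lam) * sin θ ^ 2 - x * sin (2 * θ) = p := by
      rw [hx]; field_simp; ring
    rw [outcome_rotated_snd hρ.isHermitian rfl rfl, outcome_rotated_fst hρ.isHermitian rfl rfl]
    simp only [of_apply, cons_val', cons_val_zero, cons_val_one, empty_val', cons_val_fin_one,
      Complex.ofReal_re, hp]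

lemma isLeast_max_one_sub_image_Icc_of_half_lt {a b : ℝ} (hab : a ≤ b) (ha : 1 / 2 < a) :
    IsLeast ((fun p => max p (1 - p)) '' Set.Icc a b) a :=
  ⟨⟨a, ⟨le_rfl, hab⟩, max_eq_left (by linarith)⟩,
    by rintro _ ⟨p, ⟨hap, -⟩, rfl⟩; exact le_max_of_le_left hap⟩

lemma isLeast_max_one_sub_image_Icc_of_lt_half {a b : ℝ} (hab : a ≤ b) (hb : b < 1 / 2) :
    IsLeast ((fun p => max p (1 - p)) '' Set.Icc a b) (1 - b) :=
  ⟨⟨b, ⟨hab, le_rfl⟩, max_eq_right (by linarith)⟩,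
    by rintro _ ⟨p, ⟨-, hpb⟩, rfl⟩; exact le_max_of_le_right (by linarith)⟩

lemma isLeast_max_one_sub_image_Icc_of_half_mem {a b : ℝ} (ha : a ≤ 1 / 2) (hb : 1 / 2 ≤ b) :
    IsLeast ((fun p => max p (1 - p)) '' Set.Icc a b) (1 / 2) :=
  ⟨⟨1 / 2, ⟨ha, hb⟩, by norm_num⟩,
    by
      rintro _ ⟨p, -, rfl⟩
      rcases le_total (1 / 2) p with h | h
      exacts [le_max_of_le_left h, le_max_of_le_right (by linarith)]⟩

lemma sq_sqrt_mul_sin_sub_sqrt_mul_cos {a b : ℝ} (ha : 0 ≤ a) (hb : 0 ≤ b) (θ : ℝ) :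
    (√a * sin θ - √b * cos θ) ^ 2 = b * cos θ ^ 2 + a * sin θ ^ 2 - √(b * a) * sin (2 * θ) := by
  rw [sqrt_mul hb, sin_two_mul]
  linear_combination sin θ ^ 2 * sq_sqrt ha + cos θ ^ 2 * sq_sqrt hb

/-- qubit lower bound.  With `N = {v₁, v₂}` the rotated basis and `ρ`
ranging over density matrices with diagonal `(λ, 1-λ)` in the computational basis,
the minimum of `max{⟨v₁|ρ|v₁⟩, ⟨v₂|ρ|v₂⟩}` equals
`(√(1−λ) sinθ − √λ cosθ)²` when `cot 2θ < −2√(λ(1−λ))/(1−2λ)`,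
`1/2` when `|cot 2θ| ≤ 2√(λ(1−λ))/(1−2λ)`, and
`(√λ sinθ − √(1−λ) cosθ)²` when `cot 2θ > 2√(λ(1−λ))/(1−2λ)`. -/
theorem qubit_lower_bound (θ lam : ℝ) (hθ0 : 0 < θ) (hθ1 : θ < π / 2)
    (hl0 : 0 < lam) (hl1 : lam < 1 / 2)
    (v₁ v₂ : Fin 2 → ℂ)
    (hv₁ : v₁ = ![(Real.cos θ : ℂ), (-(Real.sin θ) : ℂ)])
    (hv₂ : v₂ = ![(Real.sin θ : ℂ), (Real.cos θ : ℂ)]) :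
    (Real.cos (2 * θ) / Real.sin (2 * θ) <
        -(2 * Real.sqrt (lam * (1 - lam)) / (1 - 2 * lam)) →
      IsLeast {t : ℝ | ∃ ρ : Matrix (Fin 2) (Fin 2) ℂ, ρ.PosSemidef ∧
          ρ 0 0 = (lam : ℂ) ∧ ρ 1 1 = ((1 - lam : ℝ) : ℂ) ∧
          t = max (outcome ρ v₁) (outcome ρ v₂)}
        ((Real.sqrt (1 - lam) * Real.sin θ - Real.sqrt lam * Real.cos θ) ^ 2)) ∧
    (|Real.cos (2 * θ) / Real.sin (2 * θ)| ≤
        2 * Real.sqrt (lam * (1 - lam)) / (1 - 2 * lam) →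
      IsLeast {t : ℝ | ∃ ρ : Matrix (Fin 2) (Fin 2) ℂ, ρ.PosSemidef ∧
          ρ 0 0 = (lam : ℂ) ∧ ρ 1 1 = ((1 - lam : ℝ) : ℂ) ∧
          t = max (outcome ρ v₁) (outcome ρ v₂)}
        (1 / 2)) ∧
    (2 * Real.sqrt (lam * (1 - lam)) / (1 - 2 * lam) <
        Real.cos (2 * θ) / Real.sin (2 * θ) →
      IsLeast {t : ℝ | ∃ ρ : Matrix (Fin 2) (Fin 2) ℂ, ρ.PosSemidef ∧
          ρ 0 0 = (lam : ℂ) ∧ ρ 1 1 = ((1 - lam : ℝ) : ℂ) ∧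
          t = max (outcome ρ v₁) (outcome ρ v₂)}
        ((Real.sqrt lam * Real.sin θ - Real.sqrt (1 - lam) * Real.cos θ) ^ 2)) := by
  subst hv₁ hv₂
  have hs : 0 < sin (2 * θ) := sin_pos_of_pos_of_lt_pi (by linarith) (by linarith)
  have hl : 0 < 1 - 2 * lam := by linarith
  have hr : 0 ≤ √(lam * (1 - lam)) * sin (2 * θ) := by positivity
  have hmid :
      lam * cos θ ^ 2 + (1 - lam) * sin θ ^ 2 = 1 / 2 - (1 - 2 * lam) * cos (2 * θ) / 2 := by
    rw [cos_two_mul']; linear_combination sin_sq_add_cos_sq θ / 2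
  rw [setOf_max_outcome_rotated_eq_image_Icc hl0 (by linarith) hs,
    sq_sqrt_mul_sin_sub_sqrt_mul_cos (by linarith) hl0.le,
    sq_sqrt_mul_sin_sub_sqrt_mul_cos hl0.le (by linarith), mul_comm (1 - lam) lam]
  refine ⟨fun h => ?_, fun h => ?_, fun h => ?_⟩
  · rw [← neg_div, div_lt_div_iff₀ hs hl] at h
    exact isLeast_max_one_sub_image_Icc_of_half_lt (by linarith) (by linarith)
  · obtain ⟨hlo, hhi⟩ := abs_le.mp h
    rw [← neg_div, div_le_div_iff₀ hl hs] at hlo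
    rw [div_le_div_iff₀ hs hl] at hhi
    exact isLeast_max_one_sub_image_Icc_of_half_mem (by linarith) (by linarith)
  · rw [div_lt_div_iff₀ hl hs] at h
    have hval : (1 - lam) * cos θ ^ 2 + lam * sin θ ^ 2 - √(lam * (1 - lam)) * sin (2 * θ) =
        1 - (lam * cos θ ^ 2 + (1 - lam) * sin θ ^ 2 + √(lam * (1 - lam)) * sin (2 * θ)) := by
      linear_combination sin_sq_add_cos_sq θ
    rw [hval]
    exact isLeast_max_one_sub_image_Icc_of_lt_half (by linarith) (by linarith)
end
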